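/- arXiv:2601.09244 — 2 statements merged into one kernel-verified Lean document; each statement's English description precedes it below -/
import Mathlib

section
/- Let r ≥ 3, k ≥ 1, ℓ_1 ≥ ℓ_2 ≥ ⋯ ≥ ℓ_k ≥ 2 and s ≥ k + r − 1 be integers. Then there exist a constant c and an integer N such that ex_r(n, K_s^{(r)}, S^r_{ℓ_1} ∪ ⋯ ∪ S^r_{ℓ_k}) ≤ c·n^{r−2} for all n ≥ N. Moreover, if k + r − 1 ≤ s ≤ Σ_{i=1}^{k}(ℓ_i + 1) + r − 3, then there also exists a constant c' > 0 such that ex_r(n, K_s^{(r)}, S^r_{ℓ_1} ∪ ⋯ ∪ S^r_{ℓ_k}) ≥ c'·n^{r−2} for all n ≥ N. -/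
open Finset

/-- A hypergraph (with vertices drawn from `ℕ`) given by its finite set of hyperedges. -/
abbrev HG : Type := Finset (Finset ℕ)

/-- The support (set of non-isolated vertices) of a hypergraph. -/
def hsupp (G : HG) : Finset ℕ := G.sup id

/-- `G` is `r`-uniform: every hyperedge has exactly `r` vertices. -/
def Uniform (r : ℕ) (G : HG) : Prop := ∀ e ∈ G, e.card = r

/-- The image of a hypergraph under a relabelling of the vertices. -/
def emap (f : ℕ → ℕ) (G : HG) : HG := G.image (Finset.image f)

/-- `K` is an isomorphic copy of `H` (as hypergraphs; isolated vertices are irrelevant). -/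
def IsCopy (H K : HG) : Prop :=
  ∃ f : ℕ → ℕ, Set.InjOn f ↑(hsupp H) ∧ emap f H = K

/-- `G` contains a subhypergraph isomorphic to `H`. -/
def Contains (G H : HG) : Prop := ∃ K, K ⊆ G ∧ IsCopy H K

/-- `N(H, G)`: the number of subhypergraphs of `G` isomorphic to `H`. -/
noncomputable def copyCount (H G : HG) : ℕ :=
  Set.ncard {K : HG | K ⊆ G ∧ IsCopy H K}

/-- The generalized Turán number `ex_r(n, H, F)`: the maximum number of copies of `H`
in an `F`-free `r`-uniform hypergraph on `n` vertices. -/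
noncomputable def exCount (r n : ℕ) (H F : HG) : ℕ :=
  sSup { m | ∃ G : HG, Uniform r G ∧ hsupp G ⊆ Finset.range n ∧
    ¬ Contains G F ∧ m = copyCount H G }

/-- The Turán number `ex_r(n, F)`: the maximum number of hyperedges in an `F`-free
`r`-uniform hypergraph on `n` vertices. -/
noncomputable def exTuran (r n : ℕ) (F : HG) : ℕ :=
  sSup { m | ∃ G : HG, Uniform r G ∧ hsupp G ⊆ Finset.range n ∧
    ¬ Contains G F ∧ m = G.card }

/-- The complete `r`-graph `K_s^{(r)}` on `s` vertices. -/
def completeHG (r s : ℕ) : HG := Finset.powersetCard r (Finset.range s)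

/-- The path `P_l` with `l` edges, as a 2-uniform hypergraph. -/
def pathG (l : ℕ) : HG := (Finset.range l).image (fun i => ({i, i+1} : Finset ℕ))

/-- The cycle `C_l` with `l` edges, as a 2-uniform hypergraph. -/
def cycleG (l : ℕ) : HG := (Finset.range l).image (fun i => ({i, (i+1) % l} : Finset ℕ))

/-- The star `S_l = K_{1,l}` with `l` edges, as a 2-uniform hypergraph. -/
def starG (l : ℕ) : HG := (Finset.range l).image (fun i => ({0, i+1} : Finset ℕ))

/-- The `r`-expansion `F^r` of a graph `F`: insert `r - 2` new distinct vertices into each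
edge of `F`, the new vertices being distinct across edges and disjoint from `V(F)`. -/
def expansion (r : ℕ) (F : HG) : HG :=
  F.image (fun e => e.image (fun v => Nat.pair 0 v) ∪
    (Finset.range (r-2)).image (fun j => Nat.pair 1 (Nat.pair (Encodable.encode e) j)))

/-- The vertex-disjoint union of the hypergraphs `H 0, …, H (k-1)`. -/
def hIUnion (k : ℕ) (H : ℕ → HG) : HG :=
  (Finset.range k).biUnion (fun i => emap (fun v => Nat.pair i v) (H i))

/-- The vertex-disjoint union of two hypergraphs. -/
def hUnion (G H : HG) : HG := emap (fun v => 2*v) G ∪ emap (fun v => 2*v+1) H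

/-- The strong chromatic number of a hypergraph (for a 2-uniform hypergraph this is
the usual chromatic number of the graph). -/
noncomputable def chromNum (G : HG) : ℕ :=
  sInf { k | ∃ c : ℕ → Fin k, ∀ e ∈ G, Set.InjOn c ↑e }

/-- The complete balanced `l`-partite `r`-graph `T_r(n, l)` on `n` vertices. -/
def turanHG (r n l : ℕ) : HG :=
  (Finset.powersetCard r (Finset.range n)).filter
    (fun e => ∀ i ∈ e, ∀ j ∈ e, i % l = j % l → i = j)

/-- `S_{n,t}^r(n-t, l)`: take a set `U` of `t` vertices together with a disjoint copy of
`T_r(n-t, l)`, and add as hyperedges all `r`-sets meeting `U`. -/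
def splitTuranHG (r n t l : ℕ) : HG :=
  (Finset.powersetCard r (Finset.range n)).filter
    (fun e => (∃ v ∈ e, v < t) ∨ ∀ i ∈ e, ∀ j ∈ e, (i - t) % l = (j - t) % l → i = j)

/-- `S_{n,t}^r`: the `n`-vertex `r`-graph of all `r`-sets meeting a fixed set of `t` vertices. -/
def starHG (r n t : ℕ) : HG :=
  (Finset.powersetCard r (Finset.range n)).filter (fun e => ∃ v ∈ e, v < t)

/-- `F` is a member of the family `𝒦_t^r`. -/
def memFamilyK (r t : ℕ) (F : HG) : Prop :=
  Uniform r F ∧ F.card ≤ Nat.choose t 2 ∧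
    ∃ S : Finset ℕ, S.card = t ∧ ∀ u ∈ S, ∀ v ∈ S, u ≠ v → ∃ e ∈ F, u ∈ e ∧ v ∈ e

/-- The maximum number of copies of `H` in an `n`-vertex `r`-graph containing no member
of the family described by the predicate `P` as a subhypergraph. -/
noncomputable def exCountFam (r n : ℕ) (H : HG) (P : HG → Prop) : ℕ :=
  sSup { m | ∃ G : HG, Uniform r G ∧ hsupp G ⊆ Finset.range n ∧
    (∀ F : HG, P F → ¬ Contains G F) ∧ m = copyCount H G }

/-- `G` contains a Berge copy of `F`. -/
def ContainsBerge (G F : HG) : Prop :=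
  ∃ f : ℕ → ℕ, Set.InjOn f ↑(hsupp F) ∧
    ∃ φ : {e : Finset ℕ // e ∈ F} → {e : Finset ℕ // e ∈ G},
      Function.Injective φ ∧ ∀ e : {e : Finset ℕ // e ∈ F}, e.1.image f ⊆ (φ e).1

/-- `ex_s(n, Berge-F)`: the maximum number of hyperedges in an `n`-vertex `s`-graph
containing no Berge copy of `F`. -/
noncomputable def exBerge (s n : ℕ) (F : HG) : ℕ :=
  sSup { m | ∃ G : HG, Uniform s G ∧ hsupp G ⊆ Finset.range n ∧
    ¬ ContainsBerge G F ∧ m = G.card }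

/-!
An `r`-graph `G` without the expanded star forest has fewer than `k` vertices that are kernels
of sunflowers with `Λ = k + k ℓ (r - 1) + 1` petals (`ℓ ≥ l i` for all `i`): from `k` such
kernels the petals of a forest can be picked greedily. Let `B` be the set of these vertices.
The edges of `G` avoiding `B` form an `r`-graph `G'` with no such sunflower at all, hence with
`O(n ^ (r - 2))` edges: every vertex link has a cover of bounded size, the pairs whose links
contain many disjoint sets are few, and every other pair has a link of bounded cover size.
As `s ≥ r + (k - 1)`, an `s`-clique of `G` keeps at least `r` vertices outside `B`, and is then
contained in `e ∪ W ∪ B` for an edge `e ∈ G'` and the cover `W` of the link of a vertex of `e`;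
so there are `O(|G'|)` of them.

For the lower bound, the `r`-sets meeting `[a]`, `a = s - r + 2`, in at least two vertices form
a forest-free graph, since a star with `l i` petals needs `l i + 1` vertices of `[a]`; it
contains the `(n - a).choose (r - 2)` cliques `[a] ∪ B`.
-/

section Hypergraph

variable {G H : HG} {r n : ℕ}

lemma mem_hsupp {a : ℕ} : a ∈ hsupp G ↔ ∃ e ∈ G, a ∈ e := by
  simp [hsupp, Finset.mem_sup]

lemma subset_hsupp {e : Finset ℕ} (he : e ∈ G) : e ⊆ hsupp G :=
  fun _ ha => mem_hsupp.2 ⟨e, he, ha⟩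

lemma hsupp_mono (h : H ⊆ G) : hsupp H ⊆ hsupp G :=
  Finset.sup_mono h

lemma hsupp_emap (f : ℕ → ℕ) (G : HG) : hsupp (emap f G) = (hsupp G).image f := by
  ext a
  simp only [mem_hsupp, emap, mem_image]
  aesop

lemma Uniform.mono (hu : Uniform r G) (h : H ⊆ G) : Uniform r H :=
  fun e he => hu e (h he)

lemma exists_injOn_image_range_eq {T : Finset ℕ} (hT : T.card = s) :
    ∃ f : ℕ → ℕ, Set.InjOn f (range s) ∧ (range s).image f = T := by
  set f : ℕ → ℕ := fun i => if h : i < s then T.orderEmbOfFin hT ⟨i, h⟩ else 0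
  have hf : Set.InjOn f (range s) := fun a ha b hb hab => by
    rw [coe_range, Set.mem_Iio] at ha hb
    simpa [f, ha, hb] using hab
  refine ⟨f, hf, eq_of_subset_of_card_le (fun x hx => ?_) ?_⟩
  · obtain ⟨i, hi, rfl⟩ := mem_image.1 hx
    have hi : i < s := mem_range.1 hi
    simp [f, hi]
  · rw [card_image_of_injOn hf, card_range, hT]

def degree (H : HG) (S : Finset ℕ) : ℕ := (H.filter (S ⊆ ·)).card

/-- Multiplicative form: no truncated subtraction, and it also covers `r < S.card`. -/
lemma pow_card_mul_degree_le (hu : Uniform r H) (hs : hsupp H ⊆ range n) (S : Finset ℕ) :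
    n ^ S.card * degree H S ≤ n ^ r := by
  rcases le_or_gt S.card r with hSr | hSr
  · have hdeg : degree H S ≤ n ^ (r - S.card) := by
      calc degree H S ≤ ((range n).powersetCard (r - S.card)).card := by
            refine card_le_card_of_injOn (· \ S) (fun e he => ?_) (fun e he e' he' h => ?_)
            · rw [mem_coe, mem_filter] at he
              rw [mem_coe, mem_powersetCard]
              exact ⟨sdiff_subset.trans ((subset_hsupp he.1).trans hs),
                by rw [card_sdiff_of_subset he.2, hu e he.1]⟩
            · rw [mem_coe, mem_filter] at he he'
              rw [← sdiff_union_of_subset he.2, ← sdiff_union_of_subset he'.2]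
              exact congrArg (· ∪ S) h
        _ ≤ n ^ (r - S.card) := by
            rw [card_powersetCard, card_range]; exact Nat.choose_le_pow _ _
    calc n ^ S.card * degree H S ≤ n ^ S.card * n ^ (r - S.card) := Nat.mul_le_mul_left _ hdeg
      _ = n ^ r := by rw [← pow_add, Nat.add_sub_cancel' hSr]
  · have : degree H S = 0 := card_eq_zero.2 <| filter_eq_empty_iff.2 fun e he hSe => by
      have := card_le_card hSe
      rw [hu e he] at this
      omega
    simp [this]

lemma card_filter_exists_subset_le {c K : ℕ} (𝒮 : HG) (hn : 0 < n) (hu : Uniform r H)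
    (hs : hsupp H ⊆ range n) (hc : 2 ≤ c) (h𝒮c : ∀ S ∈ 𝒮, c ≤ S.card)
    (h𝒮 : 𝒮.card ≤ K * n ^ (c - 2)) :
    (H.filter fun e => ∃ S ∈ 𝒮, S ⊆ e).card ≤ K * n ^ (r - 2) := by
  have hdeg : (H.filter fun e => ∃ S ∈ 𝒮, S ⊆ e).card ≤ ∑ S ∈ 𝒮, degree H S := by
    calc _ ≤ (𝒮.biUnion fun S => H.filter (S ⊆ ·)).card := card_le_card fun e he => by
          obtain ⟨he, S, hS, hSe⟩ := mem_filter.1 he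
          exact mem_biUnion.2 ⟨S, hS, mem_filter.2 ⟨he, hSe⟩⟩
      _ ≤ ∑ S ∈ 𝒮, degree H S := card_biUnion_le
  refine Nat.le_of_mul_le_mul_left ?_ (pow_pos hn c)
  calc _ ≤ n ^ c * ∑ S ∈ 𝒮, degree H S := Nat.mul_le_mul_left _ hdeg
    _ = ∑ S ∈ 𝒮, n ^ c * degree H S := mul_sum _ _ _
    _ ≤ ∑ S ∈ 𝒮, n ^ S.card * degree H S := sum_le_sum fun S hS =>
        Nat.mul_le_mul_right _ (Nat.pow_le_pow_right hn (h𝒮c S hS))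
    _ ≤ 𝒮.card * n ^ r := by
        simpa using sum_le_sum fun S _ => pow_card_mul_degree_le hu hs S
    _ ≤ K * n ^ (c - 2) * n ^ r := Nat.mul_le_mul_right _ h𝒮
    _ = K * n ^ (c - 2 + r) := by ring
    _ ≤ K * n ^ (c + (r - 2)) := Nat.mul_le_mul_left _ (Nat.pow_le_pow_right hn (by omega))
    _ = n ^ c * (K * n ^ (r - 2)) := by ring

end Hypergraph

section Matching

variable {α ι : Type*}

def HasMatching (𝒬 : Finset (Finset α)) (t : ℕ) : Prop :=
  ∃ 𝓜 ⊆ 𝒬, (𝓜 : Set (Finset α)).PairwiseDisjoint id ∧ t ≤ 𝓜.card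

lemma HasMatching.mono {𝒬 𝒬' : Finset (Finset α)} {t : ℕ} (h : HasMatching 𝒬 t) (h𝒬 : 𝒬 ⊆ 𝒬') :
    HasMatching 𝒬' t :=
  let ⟨𝓜, h𝓜, hdisj, ht⟩ := h
  ⟨𝓜, h𝓜.trans h𝒬, hdisj, ht⟩

lemma card_filter_not_disjoint_le [DecidableEq α] {𝒜 : Finset (Finset α)}
    (h𝒜 : (𝒜 : Set (Finset α)).PairwiseDisjoint id) (X : Finset α) :
    (𝒜.filter (¬ Disjoint · X)).card ≤ X.card := by
  refine card_le_card_of_forall_subsingleton (fun A x => x ∈ A) (fun A hA => ?_)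
    (fun x _ A hA B hB => ?_)
  · obtain ⟨x, hxA, hxX⟩ := not_disjoint_iff.1 (mem_filter.1 hA).2
    exact ⟨x, hxX, hxA⟩
  · by_contra hAB
    exact disjoint_left.1 (h𝒜 (mem_filter.1 hA.1).1 (mem_filter.1 hB.1).1 hAB) hA.2 hB.2

/-- Greedy: as `𝒜 i` is a disjoint family, `F i` and the sets chosen before meet at most
`|F i| + |s| w` of its members. -/
lemma exists_pairwiseDisjoint_choice [DecidableEq α] [DecidableEq ι] (s : Finset ι)
    (𝒜 : ι → Finset (Finset α)) (F : ι → Finset α) (w : ℕ)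
    (hdisj : ∀ i ∈ s, (𝒜 i : Set (Finset α)).PairwiseDisjoint id)
    (hw : ∀ i ∈ s, ∀ A ∈ 𝒜 i, A.card ≤ w) (hbig : ∀ i ∈ s, (F i).card + s.card * w < (𝒜 i).card) :
    ∃ Q : ι → Finset α, (∀ i ∈ s, Q i ∈ 𝒜 i ∧ Disjoint (Q i) (F i)) ∧
      (s : Set ι).PairwiseDisjoint Q := by
  induction s using Finset.induction_on with
  | empty => exact ⟨fun _ => ∅, by simp, by simp⟩
  | insert a s ha ih =>
    have hsub : s ⊆ insert a s := subset_insert a s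
    obtain ⟨Q, hQ, hQdisj⟩ := ih (fun i hi => hdisj i (hsub hi)) (fun i hi => hw i (hsub hi))
      fun i hi => (hbig i (hsub hi)).trans_le' (by gcongr)
    set X := F a ∪ s.biUnion Q
    have hX : X.card < (𝒜 a).card := by
      have hQs : (s.biUnion Q).card ≤ s.card * w :=
        card_biUnion_le_card_mul _ _ _ fun i hi => hw i (hsub hi) _ (hQ i hi).1
      have := hbig a (mem_insert_self a s)
      rw [card_insert_of_notMem ha] at this
      calc X.card ≤ (F a).card + (s.biUnion Q).card := card_union_le _ _
        _ < (𝒜 a).card := by nlinarith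
    obtain ⟨A, hA, hAX⟩ : ∃ A ∈ 𝒜 a, Disjoint A X := by
      by_contra! h
      have := card_filter_not_disjoint_le (hdisj a (mem_insert_self a s)) X
      rw [filter_true_of_mem h] at this
      omega
    have hne : ∀ i ∈ s, i ≠ a := fun i hi h => ha (h ▸ hi)
    refine ⟨Function.update Q a A, fun i hi => ?_, fun i hi j hj hij => ?_⟩
    · rcases mem_insert.1 hi with rfl | hi
      · simpa using ⟨hA, hAX.mono_right subset_union_left⟩
      · simpa [hne i hi] using hQ i hi
    · rw [mem_coe] at hi hj
      change Disjoint (Function.update Q a A i) (Function.update Q a A j)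
      have hQX : ∀ i ∈ s, Disjoint A (Q i) := fun i hi =>
        hAX.mono_right (subset_union_right.trans' (subset_biUnion_of_mem Q hi))
      rcases mem_insert.1 hi with rfl | hi' <;> rcases mem_insert.1 hj with rfl | hj'
      · exact absurd rfl hij
      · simpa [hne j hj'] using hQX j hj'
      · simpa [hne i hi'] using (hQX i hi').symm
      · simpa [hne i hi', hne j hj'] using hQdisj (mem_coe.2 hi') (mem_coe.2 hj') hij

lemma hasMatching_or_exists_cover [DecidableEq α] {𝒬 : Finset (Finset α)} (hemp : ∅ ∉ 𝒬) {w : ℕ}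
    (hw : ∀ q ∈ 𝒬, q.card ≤ w) (t : ℕ) :
    HasMatching 𝒬 t ∨ ∃ W : Finset α, W.card ≤ t * w ∧ ∀ q ∈ 𝒬, ¬ Disjoint q W := by
  induction t generalizing 𝒬 with
  | zero => exact Or.inl ⟨∅, empty_subset _, by simp, le_rfl⟩
  | succ t ih =>
    rcases 𝒬.eq_empty_or_nonempty with rfl | ⟨q₀, hq₀⟩
    · exact Or.inr ⟨∅, by simp, by simp⟩
    rcases ih (𝒬 := 𝒬.filter (Disjoint · q₀)) (fun h => hemp (mem_filter.1 h).1)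
      (fun q hq => hw q (mem_filter.1 hq).1) with ⟨𝓜, h𝓜, hdisj, ht⟩ | ⟨W, hW, hcov⟩
    · have hq₀𝓜 : q₀ ∉ 𝓜 := fun h =>
        hemp (by simpa [disjoint_self.1 (mem_filter.1 (h𝓜 h)).2] using hq₀)
      refine Or.inl ⟨insert q₀ 𝓜, insert_subset hq₀ (h𝓜.trans (filter_subset _ _)), ?_, ?_⟩
      · rw [coe_insert]
        exact hdisj.insert fun q hq _ => (mem_filter.1 (h𝓜 hq)).2.symm
      · rw [card_insert_of_notMem hq₀𝓜]
        omega
    · refine Or.inr ⟨W ∪ q₀, ?_, fun q hq hdis => ?_⟩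
      · calc (W ∪ q₀).card ≤ W.card + q₀.card := card_union_le _ _
          _ ≤ (t + 1) * w := by rw [add_mul, one_mul]; exact add_le_add hW (hw q₀ hq₀)
      · rw [disjoint_union_right] at hdis
        exact hcov q (mem_filter.2 ⟨hq, hdis.2⟩) hdis.1

end Matching

section Link

def link (H : HG) (S : Finset ℕ) : HG := (H.filter (S ⊆ ·)).image (· \ S)

variable {H : HG} {r : ℕ} {S : Finset ℕ}

lemma mem_link {Q : Finset ℕ} : Q ∈ link H S ↔ ∃ e ∈ H, S ⊆ e ∧ e \ S = Q := by
  simp [link, and_assoc]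

lemma link_mono {H' : HG} (h : H' ⊆ H) : link H' S ⊆ link H S :=
  image_subset_image (filter_subset_filter _ h)

lemma card_of_mem_link (hu : Uniform r H) {Q : Finset ℕ} (hQ : Q ∈ link H S) :
    Q.card = r - S.card := by
  obtain ⟨e, he, hSe, rfl⟩ := mem_link.1 hQ
  rw [card_sdiff_of_subset hSe, hu e he]

lemma exists_cover_of_not_hasMatching (hu : Uniform r H) (hS : S.card < r) {t : ℕ}
    (h : ¬ HasMatching (link H S) t) :
    ∃ W : Finset ℕ, W.card ≤ t * (r - S.card) ∧ ∀ e ∈ H, S ⊆ e → ∃ w ∈ W, w ∈ e ∧ w ∉ S := by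
  have hemp : ∅ ∉ link H S := fun h => by
    have := card_of_mem_link hu h
    simp at this
    omega
  obtain h' | ⟨W, hW, hcov⟩ :=
    hasMatching_or_exists_cover hemp (fun q hq => (card_of_mem_link hu hq).le) t
  · exact absurd h' h
  refine ⟨W, hW, fun e he hSe => ?_⟩
  obtain ⟨w, hw, hwW⟩ := not_disjoint_iff.1 (hcov _ (mem_link.2 ⟨e, he, hSe, rfl⟩))
  exact ⟨w, hwW, (mem_sdiff.1 hw).1, (mem_sdiff.1 hw).2⟩

lemma exists_cover_of_not_hasMatching_singleton (hu : Uniform r H) (hr : 2 ≤ r) {v t : ℕ}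
    (h : ¬ HasMatching (link H {v}) t) :
    ∃ W : Finset ℕ, W.card ≤ t * (r - 1) ∧ ∀ e ∈ H, v ∈ e → ∃ w ∈ W, w ∈ e ∧ w ≠ v := by
  simpa using exists_cover_of_not_hasMatching hu (S := {v}) (by simp; omega) h

end Link

section EdgeBound

variable {H Γ : HG} {r n : ℕ}

/-- Matchings in the links of `Λ` pairs `{v, w} ∈ Γ` combine greedily into `Λ` disjoint sets
`{w} ∪ Q` in the link of `v`. -/
lemma card_filter_mem_lt_of_not_hasMatching {Λ M v : ℕ} (hr : 2 ≤ r) (hu : Uniform r H)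
    (hΓ2 : ∀ p ∈ Γ, p.card = 2) (hΓM : ∀ p ∈ Γ, HasMatching (link H p) M) (hM : Λ * r < M)
    (hv : ¬ HasMatching (link H {v}) Λ) : (Γ.filter (v ∈ ·)).card < Λ := by
  by_contra! h
  obtain ⟨s, hsΓ, hsc⟩ := exists_subset_card_eq h
  have hs : ∀ p ∈ s, p ∈ Γ ∧ v ∈ p := fun p hp => mem_filter.1 (hsΓ hp)
  choose! 𝓜 h𝓜 hdisj hcard using fun p (hp : p ∈ s) => hΓM p (hs p hp).1
  have hF : (s.biUnion id).card ≤ s.card * 2 :=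
    card_biUnion_le_card_mul _ _ _ fun p hp => (hΓ2 p (hs p hp).1).le
  obtain ⟨Q, hQ, hQdisj⟩ := exists_pairwiseDisjoint_choice s 𝓜 (fun _ => s.biUnion id) (r - 2)
    hdisj (fun p hp A hA => by rw [card_of_mem_link hu (h𝓜 p hp hA), hΓ2 p (hs p hp).1])
    fun p hp => by
      have := hcard p hp
      have : Λ * r = Λ * (r - 2) + Λ * 2 := by rw [← mul_add]; congr 1; omega
      rw [hsc] at hF ⊢
      omega
  set P : Finset ℕ → Finset ℕ := fun p => (p ∪ Q p).erase v
  have hPlink : ∀ p ∈ s, P p ∈ link H {v} := fun p hp => by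
    obtain ⟨e, he, hpe, hQe⟩ := mem_link.1 (h𝓜 p hp (hQ p hp).1)
    refine mem_link.2 ⟨e, he, singleton_subset_iff.2 (hpe (hs p hp).2), ?_⟩
    simp only [P, ← hQe, union_sdiff_of_subset hpe, sdiff_singleton_eq_erase]
  have hpair : ∀ p ∈ s, ∀ y ∈ p, y ≠ v → p = {v, y} := fun p hp y hyp hyv =>
    (eq_of_subset_of_card_le (insert_subset (hs p hp).2 (singleton_subset_iff.2 hyp))
      (by rw [hΓ2 p (hs p hp).1, card_pair hyv.symm])).symm
  have hPdisj : (s : Set (Finset ℕ)).PairwiseDisjoint P := by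
    intro p hp p' hp' hpp'
    rw [Function.onFun, disjoint_left]
    intro y hy hy'
    simp only [P, mem_erase, mem_union] at hy hy'
    have hyF : ∀ p ∈ s, y ∈ p → y ∈ s.biUnion id := fun p hp hyp => mem_biUnion.2 ⟨p, hp, hyp⟩
    rcases hy.2 with hyp | hyQ <;> rcases hy'.2 with hyp' | hyQ'
    · exact hpp' ((hpair p hp y hyp hy.1).trans (hpair p' hp' y hyp' hy.1).symm)
    · exact disjoint_left.1 (hQ p' hp').2 hyQ' (hyF p hp hyp)
    · exact disjoint_left.1 (hQ p hp).2 hyQ (hyF p' hp' hyp')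
    · exact disjoint_left.1 (hQdisj hp hp' hpp') hyQ hyQ'
  have hPne : ∀ p ∈ s, (P p).Nonempty := fun p hp => by
    obtain ⟨y, hy, hyv⟩ := exists_mem_ne (by rw [hΓ2 p (hs p hp).1]; norm_num) v
    exact ⟨y, mem_erase.2 ⟨hyv, mem_union_left _ hy⟩⟩
  have hPinj : Set.InjOn P s := fun p hp p' hp' h => by
    by_contra hne
    have := hPdisj hp hp' hne
    rw [Function.onFun, h, disjoint_self, bot_eq_empty] at this
    exact (hPne p' hp').ne_empty this
  exact hv ⟨s.image P, image_subset_iff.2 hPlink,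
    by rw [coe_image]; exact hPinj.pairwiseDisjoint_image.2 hPdisj,
    by rw [card_image_of_injOn hPinj, hsc]⟩

lemma card_le_mul_of_card_filter_mem_le {Λ : ℕ} (hΓ : ∀ p ∈ Γ, p.Nonempty ∧ p ⊆ range n)
    (hv : ∀ v, (Γ.filter (v ∈ ·)).card ≤ Λ) : Γ.card ≤ n * Λ := by
  calc Γ.card ≤ ((range n).biUnion fun v => Γ.filter (v ∈ ·)).card := card_le_card fun p hp => by
        obtain ⟨v, hv⟩ := (hΓ p hp).1
        exact mem_biUnion.2 ⟨v, (hΓ p hp).2 hv, mem_filter.2 ⟨hp, hv⟩⟩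
    _ ≤ (range n).card * Λ := card_biUnion_le_card_mul _ _ _ fun v _ => hv v
    _ = n * Λ := by rw [card_range]

/-- An edge containing no pair of `Γ` contains a vertex `v`, some `w ∈ W v`, and, as `{v, w} ∉ Γ`,
some `u ∈ W₂ {v, w}`. -/
lemma card_filter_not_exists_subset_le {D D₂ : ℕ} {W : ℕ → Finset ℕ} {W₂ : Finset ℕ → Finset ℕ}
    (hn : 0 < n) (hr : 0 < r) (hu : Uniform r H) (hs : hsupp H ⊆ range n)
    (hWc : ∀ v, (W v).card ≤ D) (hW : ∀ v, ∀ e ∈ H, v ∈ e → ∃ w ∈ W v, w ∈ e ∧ w ≠ v)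
    (hW₂c : ∀ p, (W₂ p).card ≤ D₂)
    (hW₂ : ∀ p ∈ (range n).powersetCard 2, p ∉ Γ → ∀ e ∈ H, p ⊆ e → ∃ u ∈ W₂ p, u ∈ e ∧ u ∉ p) :
    (H.filter fun e => ¬ ∃ p ∈ Γ, p ⊆ e).card ≤ D * D₂ * n ^ (r - 2) := by
  set 𝒮 : HG := ((range n).biUnion fun v => (W v).biUnion fun w =>
    (W₂ {v, w}).image fun u => insert u {v, w}).filter (3 ≤ ·.card)
  have h𝒮 : 𝒮.card ≤ D * D₂ * n ^ (3 - 2) :=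
    calc 𝒮.card ≤ (range n).card * (D * D₂) := (card_filter_le _ _).trans <|
          card_biUnion_le_card_mul _ _ _ fun v _ => (card_biUnion_le_card_mul _ _ _ fun w _ =>
            card_image_le.trans (hW₂c _)).trans (Nat.mul_le_mul_right _ (hWc v))
      _ = D * D₂ * n ^ (3 - 2) := by rw [card_range]; ring
  refine (card_le_card fun e he => ?_).trans (card_filter_exists_subset_le 𝒮 hn hu hs
    (by norm_num) (fun S hS => (mem_filter.1 hS).2) h𝒮)
  obtain ⟨he, hlight⟩ := mem_filter.1 he
  have her : e ⊆ range n := (subset_hsupp he).trans hs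
  obtain ⟨v, hv⟩ : e.Nonempty := card_pos.1 (by rw [hu e he]; omega)
  obtain ⟨w, hwW, hwe, hwv⟩ := hW v e he hv
  have hpe : {v, w} ⊆ e := insert_subset hv (singleton_subset_iff.2 hwe)
  obtain ⟨u, huW, hue, hup⟩ := hW₂ _ (mem_powersetCard.2 ⟨hpe.trans her, card_pair hwv.symm⟩)
    (fun h => hlight ⟨_, h, hpe⟩) e he hpe
  refine mem_filter.2 ⟨he, insert u {v, w}, mem_filter.2 ⟨mem_biUnion.2 ⟨v, her hv,
    mem_biUnion.2 ⟨w, hwW, mem_image.2 ⟨u, huW, rfl⟩⟩⟩, ?_⟩, insert_subset hue hpe⟩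
  rw [card_insert_of_notMem hup, card_pair hwv.symm]

/-- An edge `e ⊇ p ∈ Γ` contains `u ∉ p` and some `x ∈ W u`; then `e` contains the `3`-set
`p ∪ {u}` with `x ∈ p`, or the `4`-set `p ∪ {u, x}`. -/
lemma card_filter_exists_subset_le_of_card_filter_mem_le {Λ D : ℕ} {W : ℕ → Finset ℕ}
    (hn : 0 < n) (hr : 3 ≤ r) (hu : Uniform r H) (hs : hsupp H ⊆ range n)
    (hWc : ∀ v, (W v).card ≤ D) (hW : ∀ v, ∀ e ∈ H, v ∈ e → ∃ w ∈ W v, w ∈ e ∧ w ≠ v)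
    (hΓ2 : ∀ p ∈ Γ, p.card = 2) (hΓ : Γ.card ≤ n * Λ) (hΓv : ∀ x, (Γ.filter (x ∈ ·)).card ≤ Λ) :
    (H.filter fun e => ∃ p ∈ Γ, p ⊆ e).card ≤ 2 * (Λ * D) * n ^ (r - 2) := by
  set 𝒮₃ : HG := ((range n).biUnion fun u => (W u).biUnion fun x =>
    (Γ.filter (x ∈ ·)).image (insert u)).filter (3 ≤ ·.card)
  set 𝒮₄ : HG := (Γ.biUnion fun p => (range n).biUnion fun u =>
    (W u).image fun x => insert x (insert u p)).filter (4 ≤ ·.card)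
  have h𝒮₃ : 𝒮₃.card ≤ Λ * D * n ^ (3 - 2) :=
    calc 𝒮₃.card ≤ (range n).card * (D * Λ) := (card_filter_le _ _).trans <|
          card_biUnion_le_card_mul _ _ _ fun u _ => (card_biUnion_le_card_mul _ _ _ fun x _ =>
            card_image_le.trans (hΓv x)).trans (Nat.mul_le_mul_right _ (hWc u))
      _ = Λ * D * n ^ (3 - 2) := by rw [card_range]; ring
  have h𝒮₄ : 𝒮₄.card ≤ Λ * D * n ^ (4 - 2) :=
    calc 𝒮₄.card ≤ Γ.card * (n * D) := (card_filter_le _ _).trans <|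
          card_biUnion_le_card_mul _ _ _ fun p _ => (card_biUnion_le_card_mul _ _ _ fun u _ =>
            card_image_le.trans (hWc u)).trans (by rw [card_range])
      _ ≤ n * Λ * (n * D) := Nat.mul_le_mul_right _ hΓ
      _ = Λ * D * n ^ (4 - 2) := by ring
  have h₃ := card_filter_exists_subset_le 𝒮₃ hn hu hs (by norm_num)
    (fun S hS => (mem_filter.1 hS).2) h𝒮₃
  have h₄ := card_filter_exists_subset_le 𝒮₄ hn hu hs (by norm_num)
    (fun S hS => (mem_filter.1 hS).2) h𝒮₄
  calc _ ≤ ((H.filter fun e => ∃ S ∈ 𝒮₃, S ⊆ e) ∪ H.filter fun e => ∃ S ∈ 𝒮₄, S ⊆ e).card := by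
        refine card_le_card fun e he => ?_
        obtain ⟨he, p, hp, hpe⟩ := mem_filter.1 he
        have her : e ⊆ range n := (subset_hsupp he).trans hs
        obtain ⟨u, hue, hup⟩ : ∃ u ∈ e, u ∉ p := exists_of_ssubset <| ssubset_of_subset_of_ne hpe
          fun h => by have := hu e he; rw [← h, hΓ2 p hp] at this; omega
        obtain ⟨x, hxW, hxe, hxu⟩ := hW u e he hue
        have hupe : insert u p ⊆ e := insert_subset hue hpe
        by_cases hxp : x ∈ p
        · refine mem_union_left _ (mem_filter.2 ⟨he, insert u p, mem_filter.2 ⟨mem_biUnion.2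
            ⟨u, her hue, mem_biUnion.2 ⟨x, hxW, mem_image.2 ⟨p, mem_filter.2 ⟨hp, hxp⟩, rfl⟩⟩⟩,
            ?_⟩, hupe⟩)
          rw [card_insert_of_notMem hup, hΓ2 p hp]
        · refine mem_union_right _ (mem_filter.2 ⟨he, insert x (insert u p), mem_filter.2
            ⟨mem_biUnion.2 ⟨p, hp, mem_biUnion.2 ⟨u, her hue, mem_image.2 ⟨x, hxW, rfl⟩⟩⟩, ?_⟩,
            insert_subset hxe hupe⟩)
          rw [card_insert_of_notMem (by simp [hxu, hxp]), card_insert_of_notMem hup, hΓ2 p hp]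
    _ ≤ Λ * D * n ^ (r - 2) + Λ * D * n ^ (r - 2) := (card_union_le _ _).trans (add_le_add h₃ h₄)
    _ = 2 * (Λ * D) * n ^ (r - 2) := by ring

end EdgeBound

theorem card_le_of_forall_not_hasMatching {H : HG} {r n Λ : ℕ} (hn : 0 < n) (hr : 3 ≤ r)
    (hu : Uniform r H) (hs : hsupp H ⊆ range n) (hH : ∀ v, ¬ HasMatching (link H {v}) Λ) :
    H.card ≤ Λ * (r - 1) * ((Λ * r + 1) * (r - 2) + 2 * Λ) * n ^ (r - 2) := by
  classical
  choose W hWc hW using fun v => exists_cover_of_not_hasMatching_singleton hu (by omega) (hH v)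
  set Γ := ((range n).powersetCard 2).filter fun p => HasMatching (link H p) (Λ * r + 1)
  have hΓ2 : ∀ p ∈ Γ, p.card = 2 := fun p hp => (mem_powersetCard.1 (mem_filter.1 hp).1).2
  have hΓv : ∀ v, (Γ.filter (v ∈ ·)).card ≤ Λ := fun v =>
    (card_filter_mem_lt_of_not_hasMatching (by omega) hu hΓ2 (fun p hp => (mem_filter.1 hp).2)
      (lt_add_one _) (hH v)).le
  have hΓ : Γ.card ≤ n * Λ := card_le_mul_of_card_filter_mem_le (fun p hp =>
    ⟨card_pos.1 (by rw [hΓ2 p hp]; omega), (mem_powersetCard.1 (mem_filter.1 hp).1).1⟩) hΓv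
  have hW₂ : ∀ p, ∃ W : Finset ℕ, W.card ≤ (Λ * r + 1) * (r - 2) ∧
      (p ∈ (range n).powersetCard 2 → p ∉ Γ → ∀ e ∈ H, p ⊆ e → ∃ u ∈ W, u ∈ e ∧ u ∉ p) := by
    intro p
    by_cases hp : p ∈ (range n).powersetCard 2 ∧ p ∉ Γ
    · have hp2 := (mem_powersetCard.1 hp.1).2
      obtain ⟨W, hWc, hW⟩ := exists_cover_of_not_hasMatching hu (by omega)
        fun h => hp.2 (mem_filter.2 ⟨hp.1, h⟩)
      exact ⟨W, by rwa [hp2] at hWc, fun _ _ => hW⟩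
    · exact ⟨∅, by simp, fun h1 h2 => absurd ⟨h1, h2⟩ hp⟩
  choose W₂ hW₂c hW₂ using hW₂
  calc H.card = (H.filter fun e => ∃ p ∈ Γ, p ⊆ e).card +
        (H.filter fun e => ¬ ∃ p ∈ Γ, p ⊆ e).card := (card_filter_add_card_filter_not _).symm
    _ ≤ 2 * (Λ * (Λ * (r - 1))) * n ^ (r - 2) +
        Λ * (r - 1) * ((Λ * r + 1) * (r - 2)) * n ^ (r - 2) :=
      add_le_add (card_filter_exists_subset_le_of_card_filter_mem_le hn hr hu hs hWc hW hΓ2 hΓ hΓv)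
        (card_filter_not_exists_subset_le hn (by omega) hu hs hWc hW hW₂c hW₂)
    _ = _ := by ring

section Cliques

variable {G H : HG} {r n s : ℕ}

def cliqueFinset (G : HG) (r n s : ℕ) : HG :=
  ((range n).powersetCard s).filter fun T => ∀ e ∈ T.powersetCard r, e ∈ G

lemma powersetCard_image_of_injOn {f : ℕ → ℕ} {A : Finset ℕ} (hf : Set.InjOn f A) :
    (A.powersetCard r).image (image f) = (A.image f).powersetCard r := by
  ext S
  simp only [mem_image, mem_powersetCard]
  constructor
  · rintro ⟨U, ⟨hUA, rfl⟩, rfl⟩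
    exact ⟨image_subset_image hUA, card_image_of_injOn (hf.mono hUA)⟩
  · rintro ⟨hS, rfl⟩
    obtain ⟨U, hUA, rfl⟩ := subset_image_iff.1 hS
    exact ⟨U, ⟨hUA, (card_image_of_injOn (hf.mono hUA)).symm⟩, rfl⟩

lemma hsupp_powersetCard {T : Finset ℕ} (hr : 1 ≤ r) (hrT : r ≤ T.card) :
    hsupp (T.powersetCard r) = T := by
  refine Subset.antisymm (fun t ht => ?_) fun t ht => ?_
  · obtain ⟨e, he, hte⟩ := mem_hsupp.1 ht
    exact (mem_powersetCard.1 he).1 hte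
  · obtain ⟨e, hte, heT, hec⟩ := exists_subsuperset_card_eq (singleton_subset_iff.2 ht)
      (by simpa using hr) hrT
    exact mem_hsupp.2 ⟨e, mem_powersetCard.2 ⟨heT, hec⟩, hte (mem_singleton_self t)⟩

lemma isCopy_completeHG_iff (hr : 1 ≤ r) (hrs : r ≤ s) {K : HG} :
    IsCopy (completeHG r s) K ↔ ∃ T : Finset ℕ, T.card = s ∧ T.powersetCard r = K := by
  have hsupp_eq : hsupp (completeHG r s) = range s := hsupp_powersetCard hr (by simpa using hrs)
  constructor
  · rintro ⟨f, hf, rfl⟩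
    rw [hsupp_eq] at hf
    refine ⟨(range s).image f, by rw [card_image_of_injOn hf, card_range], ?_⟩
    rw [emap, completeHG, powersetCard_image_of_injOn hf]
  · rintro ⟨T, hT, rfl⟩
    obtain ⟨f, hf, hfT⟩ := exists_injOn_image_range_eq hT
    refine ⟨f, hsupp_eq ▸ hf, ?_⟩
    rw [emap, completeHG, powersetCard_image_of_injOn hf, hfT]

lemma copyCount_completeHG (hr : 1 ≤ r) (hrs : r ≤ s) (hs : hsupp G ⊆ range n) :
    copyCount (completeHG r s) G = (cliqueFinset G r n s).card := by
  have hcopies : {K : HG | K ⊆ G ∧ IsCopy (completeHG r s) K} =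
      ↑((cliqueFinset G r n s).image (powersetCard r)) := by
    ext K
    simp only [Set.mem_ofPred_eq, isCopy_completeHG_iff hr hrs, coe_image, Set.mem_image, mem_coe,
      cliqueFinset, mem_filter]
    constructor
    · rintro ⟨hKG, T, hT, rfl⟩
      have hTn : T ⊆ range n := by
        rw [← hsupp_powersetCard (T := T) hr (hT ▸ hrs)]
        exact (hsupp_mono hKG).trans hs
      exact ⟨T, ⟨mem_powersetCard.2 ⟨hTn, hT⟩, fun e he => hKG he⟩, rfl⟩
    · rintro ⟨T, ⟨hT, hTG⟩, rfl⟩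
      exact ⟨fun e he => hTG e he, T, (mem_powersetCard.1 hT).2, rfl⟩
  rw [copyCount, hcopies, Set.ncard_coe_finset]
  refine card_image_of_injOn fun T hT T' hT' h => ?_
  have hTc : ∀ {T}, T ∈ (cliqueFinset G r n s : Set (Finset ℕ)) → r ≤ T.card := fun hT =>
    hrs.trans (mem_powersetCard.1 (mem_filter.1 (mem_coe.1 hT)).1).2.ge
  rw [← hsupp_powersetCard hr (hTc hT), ← hsupp_powersetCard hr (hTc hT')]
  exact congrArg hsupp h

/-- `R \ (W ∪ {v})` has fewer than `r - 1` elements: otherwise, together with `v`, it would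
contain an edge through `v` missing `W`. -/
lemma exists_edge_subset_union {R W : Finset ℕ} {v : ℕ} (hr : 1 ≤ r) (hvR : v ∈ R) (hR : r ≤ R.card)
    (hRH : ∀ e ∈ R.powersetCard r, e ∈ H) (hW : ∀ e ∈ H, v ∈ e → ∃ w ∈ W, w ∈ e ∧ w ≠ v) :
    ∃ e ∈ H, v ∈ e ∧ R ⊆ e ∪ W := by
  set R' := R \ insert v W
  have hR' : R'.card + 1 < r := by
    by_contra! h
    obtain ⟨Q, hQR', hQ⟩ := exists_subset_card_eq (s := R') (n := r - 1) (by omega)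
    have hvQ : v ∉ Q := fun hv => (mem_sdiff.1 (hQR' hv)).2 (mem_insert_self v W)
    have hQR : Q ⊆ R := hQR'.trans sdiff_subset
    obtain ⟨w, hwW, hwe, hwv⟩ := hW _ (hRH _ (mem_powersetCard.2 ⟨insert_subset hvR hQR,
      by rw [card_insert_of_notMem hvQ, hQ]; omega⟩)) (mem_insert_self v Q)
    have hwQ : w ∈ Q := (mem_insert.1 hwe).resolve_left hwv
    exact (mem_sdiff.1 (hQR' hwQ)).2 (mem_insert_of_mem hwW)
  obtain ⟨e, hRe, heR, hec⟩ := exists_subsuperset_card_eq (insert_subset hvR sdiff_subset)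
    ((card_insert_le v R').trans (by omega)) hR
  refine ⟨e, hRH e (mem_powersetCard.2 ⟨heR, hec⟩), hRe (mem_insert_self v R'), fun y hy => ?_⟩
  by_cases hyR' : y ∈ R'
  · exact mem_union_left _ (hRe (mem_insert_of_mem hyR'))
  · have hyW : y ∈ insert v W := by
      by_contra h
      exact hyR' (mem_sdiff.2 ⟨hy, h⟩)
    rcases mem_insert.1 hyW with rfl | hyW
    · exact mem_union_left _ (hRe (mem_insert_self y R'))
    · exact mem_union_right _ hyW

lemma card_cliqueFinset_le {B : Finset ℕ} {W : ℕ → Finset ℕ} {b D : ℕ} (hr : 1 ≤ r)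
    (hu : Uniform r G) (hB : B.card ≤ b) (hs : r + b ≤ s) (hWc : ∀ v, (W v).card ≤ D)
    (hW : ∀ v, ∀ e ∈ G, Disjoint e B → v ∈ e → ∃ w ∈ W v, w ∈ e ∧ w ≠ v) :
    (cliqueFinset G r n s).card ≤ r * 2 ^ (r + D + b) * (G.filter (Disjoint · B)).card := by
  set G' := G.filter (Disjoint · B)
  calc _ ≤ (G'.biUnion fun e => e.biUnion fun v => (e ∪ W v ∪ B).powerset).card := by
        refine card_le_card fun T hT => ?_
        obtain ⟨hT, hTG⟩ := mem_filter.1 hT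
        have hRc : r ≤ (T \ B).card := by
          have := le_card_sdiff B T
          have := (mem_powersetCard.1 hT).2
          omega
        obtain ⟨v, hv⟩ : (T \ B).Nonempty := card_pos.1 (by omega)
        have hRG' : ∀ e ∈ (T \ B).powersetCard r, e ∈ G' := fun e he =>
          mem_filter.2 ⟨hTG e (powersetCard_mono sdiff_subset he),
            disjoint_of_subset_left (mem_powersetCard.1 he).1 sdiff_disjoint⟩
        obtain ⟨e, he, hve, hRe⟩ := exists_edge_subset_union hr hv hRc hRG'
          fun e he hve => hW v e (mem_filter.1 he).1 (mem_filter.1 he).2 hve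
        refine mem_biUnion.2 ⟨e, he, mem_biUnion.2 ⟨v, hve, mem_powerset.2 fun y hy => ?_⟩⟩
        by_cases hyB : y ∈ B
        · exact mem_union_right _ hyB
        · exact mem_union_left _ (hRe (mem_sdiff.2 ⟨hy, hyB⟩))
    _ ≤ G'.card * (r * 2 ^ (r + D + b)) := by
        refine card_biUnion_le_card_mul _ _ _ fun e he => ?_
        have her := hu e (mem_filter.1 he).1
        refine (card_biUnion_le_card_mul _ _ (2 ^ (r + D + b)) fun v _ => ?_).trans (by rw [her])
        rw [card_powerset]
        refine Nat.pow_le_pow_right two_pos ((card_union_le _ _).trans (add_le_add ?_ hB))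
        exact (card_union_le _ _).trans (by rw [her]; exact Nat.add_le_add_left (hWc v) r)
    _ = _ := mul_comm _ _

end Cliques

section Expansion

open Encodable

def expEdge (r : ℕ) (e : Finset ℕ) : Finset ℕ :=
  e.image (Nat.pair 0) ∪ (range (r - 2)).image fun j => Nat.pair 1 (Nat.pair (encode e) j)

variable {r : ℕ} {e e' : Finset ℕ}

lemma expansion_eq_image (F : HG) : expansion r F = F.image (expEdge r) := rfl

lemma mem_expEdge {w : ℕ} : w ∈ expEdge r e ↔
    (∃ v ∈ e, Nat.pair 0 v = w) ∨ ∃ j < r - 2, Nat.pair 1 (Nat.pair (encode e) j) = w := by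
  simp [expEdge]

lemma card_expEdge : (expEdge r e).card = e.card + (r - 2) := by
  rw [expEdge, card_union_of_disjoint, card_image_of_injective _ fun v v' h => by
      simpa [Nat.pair_eq_pair] using h, card_image_of_injective _ fun j j' h => by
      simpa [Nat.pair_eq_pair] using h, card_range]
  simp [disjoint_left, Nat.pair_eq_pair]

lemma expEdge_inter (h : e ≠ e') : expEdge r e ∩ expEdge r e' = (e ∩ e').image (Nat.pair 0) := by
  ext w
  simp only [mem_inter, mem_expEdge, mem_image]
  constructor
  · rintro ⟨⟨v, hv, rfl⟩ | ⟨j, -, rfl⟩, ⟨v', hv', hw⟩ | ⟨j', -, hw⟩⟩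
    · have := (Nat.pair_eq_pair.1 hw).2
      subst this
      exact ⟨_, ⟨hv, hv'⟩, rfl⟩
    all_goals simp only [Nat.pair_eq_pair] at hw
    all_goals try omega
    exact absurd (encode_injective hw.2.1.symm) h
  · rintro ⟨v, ⟨hv, hv'⟩, rfl⟩
    exact ⟨Or.inl ⟨v, hv, rfl⟩, Or.inl ⟨v, hv', rfl⟩⟩

lemma isCopy_expansion {F : HG} {g : ℕ → ℕ} {N : Finset ℕ → Finset ℕ}
    (hg : Set.InjOn g (hsupp F)) (hNc : ∀ e ∈ F, (N e).card = r - 2)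
    (hNg : ∀ e ∈ F, Disjoint (N e) ((hsupp F).image g))
    (hN : ∀ e ∈ F, ∀ e' ∈ F, e ≠ e' → Disjoint (N e) (N e')) :
    IsCopy (expansion r F) (F.image fun e => e.image g ∪ N e) := by
  choose! φ hφ hφN using fun e (he : e ∈ F) => exists_injOn_image_range_eq (hNc e he)
  set f : ℕ → ℕ := fun w => if w.unpair.1 = 0 then g w.unpair.2 else
    φ ((decode w.unpair.2.unpair.1).getD ∅) w.unpair.2.unpair.2
  have hf0 : ∀ v, f (Nat.pair 0 v) = g v := by simp [f]
  have hf1 : ∀ e j, f (Nat.pair 1 (Nat.pair (encode e) j)) = φ e j := by simp [f, encodek]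
  have hφmem : ∀ e ∈ F, ∀ j < r - 2, φ e j ∈ N e := fun e he j hj =>
    hφN e he ▸ mem_image_of_mem _ (mem_range.2 hj)
  refine ⟨f, fun w hw w' hw' hww' => ?_, ?_⟩
  · obtain ⟨E, hE, hwE⟩ := mem_hsupp.1 (mem_coe.1 hw)
    obtain ⟨E', hE', hwE'⟩ := mem_hsupp.1 (mem_coe.1 hw')
    obtain ⟨e, he, rfl⟩ := mem_image.1 hE
    obtain ⟨e', he', rfl⟩ := mem_image.1 hE'
    have hold : ∀ {e v}, e ∈ F → v ∈ e → g v ∈ (hsupp F).image g := fun he hv =>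
      mem_image_of_mem g (subset_hsupp he hv)
    rcases mem_expEdge.1 hwE with ⟨v, hv, rfl⟩ | ⟨j, hj, rfl⟩ <;>
      rcases mem_expEdge.1 hwE' with ⟨v', hv', rfl⟩ | ⟨j', hj', rfl⟩ <;>
      simp only [hf0, hf1] at hww'
    · rw [hg (subset_hsupp he hv) (subset_hsupp he' hv') hww']
    · exact absurd (hold he hv) (disjoint_left.1 (hNg e' he') (hww' ▸ hφmem e' he' j' hj'))
    · exact absurd (hold he' hv') (disjoint_left.1 (hNg e he) (hww' ▸ hφmem e he j hj))
    · obtain rfl : e = e' := by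
        by_contra hne
        exact disjoint_left.1 (hN e he e' he' hne) (hφmem e he j hj) (hww' ▸ hφmem e' he' j' hj')
      rw [hφ e he (mem_range.2 hj) (mem_range.2 hj') hww']
  · rw [emap, expansion_eq_image, image_image]
    refine image_congr fun e he => ?_
    rw [Function.comp_apply, expEdge, image_union, image_image, image_image, ← hφN e he]
    congr 1 <;> exact image_congr fun v _ => by simp [hf0, hf1]

end Expansion

section StarForest

variable {G : HG} {r k : ℕ} {l : ℕ → ℕ}

/-- The edges `P 0, …, P (ℓ - 1)` of a copy of `S_ℓ^r` with centre `x`. -/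
def IsSunflower (r x ℓ : ℕ) (P : ℕ → Finset ℕ) : Prop :=
  ∀ j < ℓ, (P j).card = r ∧ x ∈ P j ∧ ∀ j' < ℓ, j ≠ j' → P j ∩ P j' = {x}

def HasStarForest (G : HG) (r k : ℕ) (l : ℕ → ℕ) : Prop :=
  ∃ (x : ℕ → ℕ) (P : ℕ → ℕ → Finset ℕ), (∀ i < k, IsSunflower r (x i) (l i) (P i)) ∧
    (∀ i < k, ∀ j < l i, P i j ∈ G) ∧
    ∀ i < k, ∀ i' < k, i ≠ i' → ∀ j < l i, ∀ j' < l i', Disjoint (P i j) (P i' j')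

lemma mem_hsupp_starG {ℓ v : ℕ} (hv : v ∈ hsupp (starG ℓ)) : v = 0 ∨ ∃ j < ℓ, v = j + 1 := by
  obtain ⟨e, he, hve⟩ := mem_hsupp.1 hv
  obtain ⟨j, hj, rfl⟩ : ∃ j < ℓ, {0, j + 1} = e := by simpa [starG] using he
  rcases mem_insert.1 hve with rfl | hve
  · exact Or.inl rfl
  · exact Or.inr ⟨j, hj, mem_singleton.1 hve⟩

/-- The leaf `j + 1` of the star is sent to some `a j ∈ P j \ {x}`, and the new vertices of its
edge to the remaining `r - 2` vertices of `P j`. -/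
lemma isCopy_expansion_starG {x ℓ : ℕ} {P : ℕ → Finset ℕ} (hr : 2 ≤ r) (hP : IsSunflower r x ℓ P) :
    IsCopy (expansion r (starG ℓ)) ((range ℓ).image P) := by
  have hx : ∀ j < ℓ, ∀ j' < ℓ, j ≠ j' → ∀ y ∈ P j, y ∈ P j' → y = x :=
    fun j hj j' hj' hjj' y hy hy' =>
      mem_singleton.1 ((hP j hj).2.2 j' hj' hjj' ▸ mem_inter.2 ⟨hy, hy'⟩)
  choose! a ha hax using fun j (hj : j < ℓ) =>
    exists_mem_ne (by rw [(hP j hj).1]; omega : 1 < (P j).card) x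
  set g : ℕ → ℕ := fun v => if v = 0 then x else a (v - 1)
  set N : Finset ℕ → Finset ℕ := fun e => ((P (e.sup id - 1)).erase x).erase (a (e.sup id - 1))
  have hN : ∀ j, N {0, j + 1} = ((P j).erase x).erase (a j) := fun j => by simp [N]
  have hmemN : ∀ {j y}, y ∈ N {0, j + 1} → y ∈ P j ∧ y ≠ x ∧ y ≠ a j := fun hy => by
    rw [hN] at hy
    simp only [mem_erase] at hy
    exact ⟨hy.2.2, hy.2.1, hy.1⟩
  have hedge : ∀ e ∈ starG ℓ, ∃ j < ℓ, {0, j + 1} = e := fun e he => by simpa [starG] using he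
  have hcopy := isCopy_expansion (r := r) (g := g) (N := N) (F := starG ℓ) ?_ ?_ ?_ ?_
  · convert hcopy using 1
    rw [starG, image_image]
    refine image_congr fun j hj => ?_
    have hj := mem_range.1 hj
    have hxP := (hP j hj).2.1
    have haP := ha j hj
    ext y
    simp only [Function.comp_apply, mem_union, image_insert, image_singleton, mem_insert,
      mem_singleton, hN, mem_erase, g, if_pos, add_tsub_cancel_right]
    by_cases hyx : y = x <;> by_cases hya : y = a j <;> simp_all
  · intro v hv v' hv' h
    rcases mem_hsupp_starG hv with rfl | ⟨j, hj, rfl⟩ <;>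
      rcases mem_hsupp_starG hv' with rfl | ⟨j', hj', rfl⟩
    · rfl
    · simp [g, (hax j' hj').symm] at h
    · simp [g, hax j hj] at h
    · simp only [g, Nat.add_one_ne_zero, ↓reduceIte, add_tsub_cancel_right] at h
      by_contra hne
      exact hax j hj (hx j hj j' hj' (by omega) _ (ha j hj) (h ▸ ha j' hj'))
  · intro e he
    obtain ⟨j, hj, rfl⟩ := hedge e he
    rw [hN, card_erase_of_mem (mem_erase.2 ⟨hax j hj, ha j hj⟩), card_erase_of_mem (hP j hj).2.1,
      (hP j hj).1]
    omega
  · intro e he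
    obtain ⟨j, hj, rfl⟩ := hedge e he
    refine disjoint_left.2 fun y hy hyg => ?_
    obtain ⟨hyP, hyx, hya⟩ := hmemN hy
    obtain ⟨v, hv, rfl⟩ := mem_image.1 hyg
    rcases mem_hsupp_starG hv with rfl | ⟨j', hj', rfl⟩
    · exact hyx rfl
    · simp only [g, Nat.add_one_ne_zero, ↓reduceIte, add_tsub_cancel_right] at hyP hyx hya
      exact hax j' hj' (hx j hj j' hj' (fun h => hya (h ▸ rfl)) _ hyP (ha j' hj'))
  · intro e he e' he' hee'
    obtain ⟨j, hj, rfl⟩ := hedge e he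
    obtain ⟨j', hj', rfl⟩ := hedge e' he'
    refine disjoint_left.2 fun y hy hy' => (hmemN hy).2.1 ?_
    exact hx j hj j' hj' (fun h => hee' (h ▸ rfl)) y (hmemN hy).1 (hmemN hy').1

lemma mem_hsupp_hIUnion {H : ℕ → HG} {w : ℕ} (hw : w ∈ hsupp (hIUnion k H)) :
    ∃ i < k, ∃ v ∈ hsupp (H i), Nat.pair i v = w := by
  obtain ⟨e, he, hwe⟩ := mem_hsupp.1 hw
  obtain ⟨i, hi, he⟩ := mem_biUnion.1 he
  obtain ⟨E, hE, rfl⟩ := mem_image.1 he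
  obtain ⟨v, hv, rfl⟩ := mem_image.1 hwe
  exact ⟨i, mem_range.1 hi, v, subset_hsupp hE hv, rfl⟩

lemma contains_hIUnion {H K : ℕ → HG} (hKG : ∀ i < k, K i ⊆ G) (hK : ∀ i < k, IsCopy (H i) (K i))
    (hdisj : ∀ i < k, ∀ i' < k, i ≠ i' → Disjoint (hsupp (K i)) (hsupp (K i'))) :
    Contains G (hIUnion k H) := by
  choose! f hf hfK using hK
  set g : ℕ → ℕ := fun w => f w.unpair.1 w.unpair.2
  have hg : ∀ i v, g (Nat.pair i v) = f i v := by simp [g]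
  have hfK' : ∀ i < k, ∀ v ∈ hsupp (H i), f i v ∈ hsupp (K i) := fun i hi v hv => by
    rw [← hfK i hi, hsupp_emap]
    exact mem_image_of_mem _ hv
  refine ⟨emap g (hIUnion k H), fun e he => ?_, g, fun w hw w' hw' h => ?_, rfl⟩
  · obtain ⟨E, hE, rfl⟩ := mem_image.1 he
    obtain ⟨i, hi, hE⟩ := mem_biUnion.1 hE
    obtain ⟨E, hE', rfl⟩ := mem_image.1 hE
    have hi := mem_range.1 hi
    refine hKG i hi (hfK i hi ▸ mem_image.2 ⟨E, hE', ?_⟩)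
    rw [image_image]
    exact image_congr fun v _ => (hg i v).symm
  · obtain ⟨i, hi, v, hv, rfl⟩ := mem_hsupp_hIUnion hw
    obtain ⟨i', hi', v', hv', rfl⟩ := mem_hsupp_hIUnion hw'
    rw [hg, hg] at h
    obtain rfl : i = i' := by
      by_contra hne
      exact disjoint_left.1 (hdisj i hi i' hi' hne) (hfK' i hi v hv) (h ▸ hfK' i' hi' v' hv')
    rw [hf i hi hv hv' h]

lemma HasStarForest.contains (hr : 2 ≤ r) (h : HasStarForest G r k l) :
    Contains G (hIUnion k fun i => expansion r (starG (l i))) := by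
  obtain ⟨x, P, hP, hPG, hdisj⟩ := h
  refine contains_hIUnion (K := fun i => (range (l i)).image (P i)) (fun i hi e he => ?_)
    (fun i hi => isCopy_expansion_starG hr (hP i hi)) fun i hi i' hi' hii' => ?_
  · obtain ⟨j, hj, rfl⟩ := mem_image.1 he
    exact hPG i hi j (mem_range.1 hj)
  · refine disjoint_left.2 fun y hy hy' => ?_
    obtain ⟨_, he, hye⟩ := mem_hsupp.1 hy
    obtain ⟨_, he', hye'⟩ := mem_hsupp.1 hy'
    obtain ⟨j, hj, rfl⟩ := mem_image.1 he
    obtain ⟨j', hj', rfl⟩ := mem_image.1 he'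
    exact disjoint_left.1 (hdisj i hi i' hi' hii' j (mem_range.1 hj) j' (mem_range.1 hj')) hye hye'

/-- The petals of the copy are the images of the edges
`⟪i, expEdge r {0, j + 1}⟫` of the star forest. -/
lemma Contains.hasStarForest (hr : 2 ≤ r)
    (h : Contains G (hIUnion k fun i => expansion r (starG (l i)))) : HasStarForest G r k l := by
  obtain ⟨K, hKG, f, hf, rfl⟩ := h
  set F := hIUnion k fun i => expansion r (starG (l i))
  set E : ℕ → ℕ → Finset ℕ := fun i j => (expEdge r {0, j + 1}).image (Nat.pair i)
  have hpair : ∀ i, Function.Injective (Nat.pair i) := fun i a b h => (Nat.pair_eq_pair.1 h).2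
  have hEF : ∀ i < k, ∀ j < l i, E i j ∈ F := fun i hi j hj =>
    mem_biUnion.2 ⟨i, mem_range.2 hi, mem_image_of_mem _ (mem_image_of_mem _
      (mem_image_of_mem _ (mem_range.2 hj)))⟩
  have himage : ∀ i < k, ∀ j < l i, ∀ i' < k, ∀ j' < l i',
      (E i j ∩ E i' j').image f = (E i j).image f ∩ (E i' j').image f :=
    fun i hi j hj i' hi' j' hj' => image_inter_of_injOn _ _ (hf.mono (by
      rw [← coe_union]
      exact coe_subset.2 (union_subset (subset_hsupp (hEF i hi j hj))
        (subset_hsupp (hEF i' hi' j' hj')))))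
  refine ⟨fun i => f (Nat.pair i (Nat.pair 0 0)), fun i j => (E i j).image f,
    fun i hi j hj => ⟨?_, ?_, fun j' hj' hjj' => ?_⟩, fun i hi j hj => hKG (mem_image_of_mem _
      (hEF i hi j hj)), fun i hi i' hi' hii' j hj j' hj' => ?_⟩
  · rw [card_image_of_injOn (hf.mono (coe_subset.2 (subset_hsupp (hEF i hi j hj)))),
      card_image_of_injective _ (hpair i), card_expEdge, card_pair (by omega)]
    omega
  · exact mem_image_of_mem _ (mem_image_of_mem _ (mem_expEdge.2 (Or.inl ⟨0, by simp, rfl⟩)))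
  · rw [← himage i hi j hj i hi j' hj', ← image_inter _ _ (hpair i),
      expEdge_inter fun h => hjj' (by simpa using (h ▸ by simp : j + 1 ∈ ({0, j' + 1} : Finset ℕ))),
      show ({0, j + 1} ∩ {0, j' + 1} : Finset ℕ) = {0} by
        ext; simp; omega]
    simp
  · rw [disjoint_iff_inter_eq_empty, ← himage i hi j hj i' hi' j' hj', image_eq_empty,
      ← disjoint_iff_inter_eq_empty]
    simp [E, disjoint_left, Nat.pair_eq_pair, hii'.symm]

end StarForest

section UpperBound

variable {G : HG} {r k n : ℕ} {l : ℕ → ℕ}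

lemma hasStarForest_of_hasMatching {x : ℕ → ℕ} {ℓ Λ : ℕ} (hu : Uniform r G)
    (hx : Set.InjOn x (range k)) (hxΛ : ∀ i < k, HasMatching (link G {x i}) Λ)
    (hl : ∀ i < k, l i ≤ ℓ) (hΛ : k + k * ℓ * (r - 1) < Λ) : HasStarForest G r k l := by
  choose! 𝓜 h𝓜 hdisj hcard using hxΛ
  have hs : ∀ p ∈ range k ×ˢ range ℓ, p.1 < k ∧ p.2 < ℓ := fun p hp => by simpa using hp
  obtain ⟨Q, hQ, hQdisj⟩ := exists_pairwiseDisjoint_choice (range k ×ˢ range ℓ) (fun p => 𝓜 p.1)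
    (fun _ => (range k).image x) (r - 1) (fun p hp => hdisj p.1 (hs p hp).1)
    (fun p hp A hA => by rw [card_of_mem_link hu (h𝓜 _ (hs p hp).1 hA), card_singleton])
    fun p hp => by
      calc ((range k).image x).card + (range k ×ˢ range ℓ).card * (r - 1)
          ≤ k + k * ℓ * (r - 1) := by
            rw [card_product, card_range, card_range]
            exact Nat.add_le_add_right (card_image_le.trans (card_range k).le) _
        _ < (𝓜 p.1).card := hΛ.trans_le (hcard _ (hs p hp).1)
  have hmem : ∀ i < k, ∀ j < ℓ, (i, j) ∈ range k ×ˢ range ℓ := fun i hi j hj => by simp [hi, hj]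
  have hxQ : ∀ i < k, ∀ i' < k, ∀ j < ℓ, x i ∉ Q (i', j) := fun i hi i' hi' j hj h =>
    disjoint_left.1 (hQ _ (hmem i' hi' j hj)).2 h (mem_image_of_mem x (mem_range.2 hi))
  have hQG : ∀ i < k, ∀ j < ℓ, insert (x i) (Q (i, j)) ∈ G := fun i hi j hj => by
    obtain ⟨e, he, hxe, hQe⟩ := mem_link.1 (h𝓜 i hi (hQ _ (hmem i hi j hj)).1)
    rwa [← hQe, sdiff_singleton_eq_erase, insert_erase (singleton_subset_iff.1 hxe)]
  refine ⟨x, fun i j => insert (x i) (Q (i, j)), fun i hi j hj => ⟨?_, mem_insert_self _ _,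
    fun j' hj' hjj' => ?_⟩, fun i hi j hj => hQG i hi j (hj.trans_le (hl i hi)),
    fun i hi i' hi' hii' j hj j' hj' => ?_⟩
  · exact hu _ (hQG i hi j (hj.trans_le (hl i hi)))
  · rw [← insert_inter_distrib, disjoint_iff_inter_eq_empty.1 (hQdisj (mem_coe.2
      (hmem i hi j (hj.trans_le (hl i hi)))) (mem_coe.2 (hmem i hi j' (hj'.trans_le (hl i hi))))
      (by simpa using hjj')), insert_empty]
  · have hj := hj.trans_le (hl i hi)
    have hj' := hj'.trans_le (hl i' hi')
    change Disjoint (insert (x i) (Q (i, j))) (insert (x i') (Q (i', j')))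
    simp only [disjoint_insert_left, disjoint_insert_right, mem_insert, not_or]
    refine ⟨⟨fun h => hii' (hx (mem_coe.2 (mem_range.2 hi)) (mem_coe.2 (mem_range.2 hi')) h.symm),
      hxQ i' hi' i hi j hj⟩, hxQ i hi i' hi' j' hj', hQdisj (mem_coe.2 (hmem i hi j hj))
      (mem_coe.2 (hmem i' hi' j' hj')) (by simp [hii'])⟩

lemma card_lt_of_forall_hasMatching {B : Finset ℕ} {ℓ Λ : ℕ} (hu : Uniform r G)
    (hF : ¬ HasStarForest G r k l) (hl : ∀ i < k, l i ≤ ℓ) (hΛ : k + k * ℓ * (r - 1) < Λ)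
    (hB : ∀ v ∈ B, HasMatching (link G {v}) Λ) : B.card < k := by
  by_contra! h
  obtain ⟨B', hB', hB'c⟩ := exists_subset_card_eq h
  obtain ⟨x, hx, hxB⟩ := exists_injOn_image_range_eq hB'c
  exact hF (hasStarForest_of_hasMatching hu hx (fun i hi =>
    hB _ (hB' (hxB ▸ mem_image_of_mem x (mem_range.2 hi)))) hl hΛ)

theorem exists_card_cliqueFinset_le {ℓ s : ℕ} (hr : 3 ≤ r) (hl : ∀ i < k, l i ≤ ℓ)
    (hs : k + r - 1 ≤ s) : ∃ C : ℕ, ∀ n, 0 < n → ∀ G : HG, Uniform r G → hsupp G ⊆ range n →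
      ¬ HasStarForest G r k l → (cliqueFinset G r n s).card ≤ C * n ^ (r - 2) := by
  classical
  set Λ := k + k * ℓ * (r - 1) + 1
  refine ⟨r * 2 ^ (r + Λ * (r - 1) + (k - 1)) * (Λ * (r - 1) * ((Λ * r + 1) * (r - 2) + 2 * Λ)),
    fun n hn G hu hsG hF => ?_⟩
  set B := (range n).filter fun v => HasMatching (link G {v}) Λ
  have hB : B.card < k := card_lt_of_forall_hasMatching (Λ := Λ) hu hF hl (lt_add_one _)
    fun v hv => (mem_filter.1 hv).2
  set G' := G.filter (Disjoint · B)
  have hG' : ∀ v, ¬ HasMatching (link G' {v}) Λ := by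
    intro v hv
    have ⟨𝓜, h𝓜, _, hΛ⟩ := hv
    obtain ⟨Q, hQ⟩ := card_pos.1 (by omega : 0 < 𝓜.card)
    obtain ⟨e, he, hve, -⟩ := mem_link.1 (h𝓜 hQ)
    obtain ⟨heG, heB⟩ := mem_filter.1 he
    have hve : v ∈ e := singleton_subset_iff.1 hve
    exact disjoint_left.1 heB hve (mem_filter.2 ⟨hsG (subset_hsupp heG hve),
      hv.mono (link_mono (filter_subset _ _))⟩)
  have hu' : Uniform r G' := hu.mono (filter_subset _ _)
  choose W hWc hW using fun v => exists_cover_of_not_hasMatching_singleton hu' (by omega) (hG' v)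
  calc (cliqueFinset G r n s).card ≤ r * 2 ^ (r + Λ * (r - 1) + (k - 1)) * G'.card :=
        card_cliqueFinset_le (by omega) hu (Nat.le_sub_one_of_lt hB) (by omega) hWc
          fun v e he heB hve => hW v e (mem_filter.2 ⟨he, heB⟩) hve
    _ ≤ r * 2 ^ (r + Λ * (r - 1) + (k - 1)) *
        (Λ * (r - 1) * ((Λ * r + 1) * (r - 2) + 2 * Λ) * n ^ (r - 2)) :=
      Nat.mul_le_mul_left _ (card_le_of_forall_not_hasMatching hn hr hu'
        ((hsupp_mono (filter_subset _ _)).trans hsG) hG')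
    _ = _ := by ring

end UpperBound

section LowerBound

variable {G : HG} {r k n a : ℕ} {l : ℕ → ℕ}

def meetTwiceHG (r n a : ℕ) : HG :=
  ((range n).powersetCard r).filter fun e => 2 ≤ (e ∩ range a).card

lemma uniform_meetTwiceHG : Uniform r (meetTwiceHG r n a) :=
  fun _ he => (mem_powersetCard.1 (mem_filter.1 he).1).2

lemma hsupp_meetTwiceHG : hsupp (meetTwiceHG r n a) ⊆ range n := fun _ hv => by
  obtain ⟨e, he, hve⟩ := mem_hsupp.1 hv
  exact (mem_powersetCard.1 (mem_filter.1 he).1).1 hve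

/-- Each petal has a vertex of `A` other than the kernel, and two if the kernel is not in `A`. -/
lemma add_one_le_card_biUnion_inter {x ℓ : ℕ} {P : ℕ → Finset ℕ} {A : Finset ℕ}
    (hP : IsSunflower r x ℓ P) (hℓ : 1 ≤ ℓ) (hA : ∀ j < ℓ, 2 ≤ (P j ∩ A).card) :
    ℓ + 1 ≤ ((range ℓ).biUnion P ∩ A).card := by
  set V : ℕ → Finset ℕ := fun j => (P j ∩ A).erase x
  have hVdisj : (range ℓ : Set ℕ).PairwiseDisjoint V := fun j hj j' hj' hjj' =>
    disjoint_left.2 fun y hy hy' => by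
      have hyx : y ∈ P j ∩ P j' := mem_inter.2 ⟨(mem_inter.1 (mem_of_mem_erase hy)).1,
        (mem_inter.1 (mem_of_mem_erase hy')).1⟩
      rw [(hP j (mem_range.1 hj)).2.2 j' (mem_range.1 hj') hjj'] at hyx
      exact (mem_erase.1 hy).1 (mem_singleton.1 hyx)
  have hVU : (range ℓ).biUnion V ⊆ (range ℓ).biUnion P ∩ A := biUnion_subset.2 fun j hj y hy =>
    mem_inter.2 ⟨mem_biUnion.2 ⟨j, hj, (mem_inter.1 (mem_of_mem_erase hy)).1⟩,
      (mem_inter.1 (mem_of_mem_erase hy)).2⟩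
  by_cases hxA : x ∈ A
  · have hV : ∀ j ∈ range ℓ, 1 ≤ (V j).card := fun j hj => by
      have := hA j (mem_range.1 hj)
      change 1 ≤ ((P j ∩ A).erase x).card
      rw [card_erase_of_mem (mem_inter.2 ⟨(hP j (mem_range.1 hj)).2.1, hxA⟩)]
      omega
    calc ℓ + 1 ≤ ((range ℓ).biUnion V).card + 1 := by
          rw [card_biUnion hVdisj]
          simpa using sum_le_sum hV
      _ = (insert x ((range ℓ).biUnion V)).card := by
          rw [card_insert_of_notMem fun h => by
            obtain ⟨j, -, hj⟩ := mem_biUnion.1 h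
            exact (mem_erase.1 hj).1 rfl]
      _ ≤ _ := card_le_card (insert_subset (mem_inter.2 ⟨mem_biUnion.2 ⟨0, mem_range.2 hℓ,
          (hP 0 hℓ).2.1⟩, hxA⟩) hVU)
  · have hV : ∀ j ∈ range ℓ, 2 ≤ (V j).card := fun j hj => by
      change 2 ≤ ((P j ∩ A).erase x).card
      rw [erase_eq_of_notMem fun h => hxA (mem_inter.1 h).2]
      exact hA j (mem_range.1 hj)
    calc ℓ + 1 ≤ ∑ _j ∈ range ℓ, 2 := by simp; omega
      _ ≤ ((range ℓ).biUnion V).card := by rw [card_biUnion hVdisj]; exact sum_le_sum hV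
      _ ≤ _ := card_le_card hVU

lemma sum_add_one_le_card_of_hasStarForest {A : Finset ℕ} (hl : ∀ i < k, 1 ≤ l i)
    (hA : ∀ e ∈ G, 2 ≤ (e ∩ A).card) (hF : HasStarForest G r k l) :
    ∑ i ∈ range k, (l i + 1) ≤ A.card := by
  obtain ⟨x, P, hP, hPG, hdisj⟩ := hF
  set U : ℕ → Finset ℕ := fun i => (range (l i)).biUnion (P i) ∩ A
  have hUdisj : (range k : Set ℕ).PairwiseDisjoint U := fun i hi i' hi' hii' =>
    disjoint_left.2 fun y hy hy' => by
      obtain ⟨j, hj, hyj⟩ := mem_biUnion.1 (mem_inter.1 hy).1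
      obtain ⟨j', hj', hyj'⟩ := mem_biUnion.1 (mem_inter.1 hy').1
      exact disjoint_left.1 (hdisj i (mem_range.1 hi) i' (mem_range.1 hi') hii' j
        (mem_range.1 hj) j' (mem_range.1 hj')) hyj hyj'
  calc ∑ i ∈ range k, (l i + 1) ≤ ∑ i ∈ range k, (U i).card := sum_le_sum fun i hi =>
        add_one_le_card_biUnion_inter (hP i (mem_range.1 hi)) (hl i (mem_range.1 hi))
          fun j hj => hA _ (hPG i (mem_range.1 hi) j hj)
    _ = ((range k).biUnion U).card := (card_biUnion hUdisj).symm
    _ ≤ A.card := card_le_card (biUnion_subset.2 fun _ _ => inter_subset_right)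

/-- `[a] ∪ B` is a clique for every `(r - 2)`-set `B ⊆ [a, n)`. -/
lemma choose_le_card_cliqueFinset (hr : 2 ≤ r) (han : a ≤ n) :
    (n - a).choose (r - 2) ≤ (cliqueFinset (meetTwiceHG r n a) r n (a + (r - 2))).card := by
  have hdisj : ∀ {B}, B ⊆ Ico a n → Disjoint (range a) B := fun hB =>
    disjoint_left.2 fun y hy hyB => (mem_Ico.1 (hB hyB)).1.not_gt (mem_range.1 hy)
  rw [← Nat.card_Ico a n, ← card_powersetCard]
  refine card_le_card_of_injOn (range a ∪ ·) (fun B hB => ?_) fun B hB B' hB' h => ?_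
  · obtain ⟨hBI, hBc⟩ := mem_powersetCard.1 (mem_coe.1 hB)
    have hTn : range a ∪ B ⊆ range n := union_subset (range_subset_range.2 han) fun y hy =>
      mem_range.2 (mem_Ico.1 (hBI hy)).2
    refine mem_coe.2 (mem_filter.2 ⟨mem_powersetCard.2 ⟨hTn, by
      rw [card_union_of_disjoint (hdisj hBI), card_range, hBc]⟩, fun e he => ?_⟩)
    obtain ⟨heT, hec⟩ := mem_powersetCard.1 he
    have hsd : (e \ range a).card ≤ r - 2 := hBc ▸ card_le_card fun y hy =>
      ((mem_union.1 (heT (mem_sdiff.1 hy).1)).resolve_left (mem_sdiff.1 hy).2)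
    have := card_sdiff_add_card_inter e (range a)
    exact mem_filter.2 ⟨mem_powersetCard.2 ⟨heT.trans hTn, hec⟩, by omega⟩
  · have hB := (mem_powersetCard.1 (mem_coe.1 hB)).1
    have hB' := (mem_powersetCard.1 (mem_coe.1 hB')).1
    rw [← union_sdiff_cancel_left (hdisj hB), ← union_sdiff_cancel_left (hdisj hB')]
    exact congrArg (· \ range a) h

end LowerBound

section ExCount

variable {r k s : ℕ} {l : ℕ → ℕ}

lemma bddAbove_exCount_set (r n : ℕ) (H F : HG) : BddAbove
    {m | ∃ G : HG, Uniform r G ∧ hsupp G ⊆ range n ∧ ¬ Contains G F ∧ m = copyCount H G} := by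
  refine ⟨2 ^ 2 ^ n, ?_⟩
  rintro _ ⟨G, -, hsG, -, rfl⟩
  have hG : G.card ≤ 2 ^ n := by
    simpa using card_le_card fun e he => mem_powerset.2 ((subset_hsupp he).trans hsG)
  calc copyCount H G ≤ (G.powerset : Set HG).ncard :=
        Set.ncard_le_ncard fun K hK => mem_coe.2 (mem_powerset.2 hK.1)
    _ = 2 ^ G.card := by rw [Set.ncard_coe_finset, card_powerset]
    _ ≤ 2 ^ 2 ^ n := Nat.pow_le_pow_right two_pos hG

theorem exists_exCount_le (hr : 3 ≤ r) (hk : 1 ≤ k) (hs : k + r - 1 ≤ s) :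
    ∃ C : ℕ, ∀ n, 0 < n →
      exCount r n (completeHG r s) (hIUnion k fun i => expansion r (starG (l i))) ≤
        C * n ^ (r - 2) := by
  obtain ⟨C, hC⟩ := exists_card_cliqueFinset_le (ℓ := ∑ i ∈ range k, l i) hr
    (fun i hi => single_le_sum (fun _ _ => Nat.zero_le _) (mem_range.2 hi)) hs
  refine ⟨C, fun n hn => csSup_le' ?_⟩
  rintro _ ⟨G, hu, hsG, hG, rfl⟩
  rw [copyCount_completeHG (by omega) (by omega) hsG]
  exact hC n hn G hu hsG fun h => hG (h.contains (by omega))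

theorem choose_le_exCount {n a : ℕ} (hr : 3 ≤ r) (hl : ∀ i < k, 1 ≤ l i) (ha2 : 2 ≤ a)
    (ha : a < ∑ i ∈ range k, (l i + 1)) (han : a ≤ n) : (n - a).choose (r - 2) ≤
      exCount r n (completeHG r (a + (r - 2))) (hIUnion k fun i => expansion r (starG (l i))) := by
  have hfree : ¬ Contains (meetTwiceHG r n a) (hIUnion k fun i => expansion r (starG (l i))) :=
    fun h => by
      have := sum_add_one_le_card_of_hasStarForest hl (fun e he => (mem_filter.1 he).2)
        (h.hasStarForest (by omega))
      rw [card_range] at this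
      omega
  calc (n - a).choose (r - 2) ≤ (cliqueFinset (meetTwiceHG r n a) r n (a + (r - 2))).card :=
        choose_le_card_cliqueFinset (by omega) han
    _ = copyCount (completeHG r (a + (r - 2))) (meetTwiceHG r n a) :=
        (copyCount_completeHG (by omega) (by omega) hsupp_meetTwiceHG).symm
    _ ≤ _ := le_csSup (bddAbove_exCount_set _ _ _ _)
        ⟨meetTwiceHG r n a, uniform_meetTwiceHG, hsupp_meetTwiceHG, hfree, rfl⟩

end ExCount

lemma pow_le_two_pow_mul_factorial_mul_choose {n a t : ℕ} (h : 2 * (a + t) ≤ n) :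
    n ^ t ≤ 2 ^ t * (t.factorial * (n - a).choose t) :=
  calc n ^ t ≤ (2 * (n - a + 1 - t)) ^ t := Nat.pow_le_pow_left (by omega) t
    _ = 2 ^ t * (n - a + 1 - t) ^ t := Nat.mul_pow _ _ _
    _ ≤ 2 ^ t * (n - a).descFactorial t :=
        Nat.mul_le_mul_left _ (Nat.pow_sub_le_descFactorial _ _)
    _ = 2 ^ t * (t.factorial * (n - a).choose t) := by
        rw [Nat.descFactorial_eq_factorial_mul_choose]

theorem stmt7_general (r s k : ℕ) (l : ℕ → ℕ) (hr : 3 ≤ r) (hk : 1 ≤ k) (hl : ∀ i < k, 2 ≤ l i)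
    (hsk : k + r - 1 ≤ s) :
    (∃ c : ℝ, ∃ N : ℕ, ∀ n : ℕ, N ≤ n →
      (exCount r n (completeHG r s) (hIUnion k (fun i => expansion r (starG (l i)))) : ℝ) ≤
        c * (n : ℝ) ^ (r - 2)) ∧
    (s ≤ (∑ i ∈ Finset.range k, (l i + 1)) + r - 3 →
      ∃ c' : ℝ, 0 < c' ∧ ∃ N : ℕ, ∀ n : ℕ, N ≤ n →
        c' * (n : ℝ) ^ (r - 2) ≤
          (exCount r n (completeHG r s)
            (hIUnion k (fun i => expansion r (starG (l i)))) : ℝ)) := by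
  refine ⟨?_, fun hs => ?_⟩
  · obtain ⟨C, hC⟩ := exists_exCount_le (l := l) hr hk hsk
    exact ⟨C, 1, fun n hn => by exact_mod_cast hC n hn⟩
  · set a := s - (r - 2)
    have hex : ∀ n, a ≤ n → (n - a).choose (r - 2) ≤
        exCount r n (completeHG r s) (hIUnion k fun i => expansion r (starG (l i))) :=
      fun n han => by
        simpa [a, show s - (r - 2) + (r - 2) = s by omega] using
          choose_le_exCount hr (fun i hi => (hl i hi).trans' one_le_two) (by omega) (by omega) han
    refine ⟨((2 : ℝ) ^ (r - 2) * (r - 2).factorial)⁻¹, by positivity, 2 * (a + (r - 2)),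
      fun n hn => ?_⟩
    rw [inv_mul_le_iff₀ (by positivity), mul_assoc]
    calc (n : ℝ) ^ (r - 2) ≤ 2 ^ (r - 2) * ((r - 2).factorial * (n - a).choose (r - 2)) := by
          exact_mod_cast pow_le_two_pow_mul_factorial_mul_choose hn
      _ ≤ _ := by gcongr; exact_mod_cast hex n (by omega)

/-- For expansions of star forests with `s ≥ k + r - 1`:
`ex_r(n, K_s^{(r)}, S^r_{l 0} ∪ ⋯ ∪ S^r_{l (k-1)}) = O(n^{r-2})`, and if moreover
`s ≤ Σ(l i + 1) + r - 3` then it is also `Ω(n^{r-2})`. -/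
theorem stmt7 (r s k : ℕ) (l : ℕ → ℕ) (hr : 3 ≤ r) (hk : 1 ≤ k)
    (hdec : ∀ i, i + 1 < k → l (i + 1) ≤ l i) (hl : ∀ i < k, 2 ≤ l i)
    (hsk : k + r - 1 ≤ s) :
    (∃ c : ℝ, ∃ N : ℕ, ∀ n : ℕ, N ≤ n →
      (exCount r n (completeHG r s) (hIUnion k (fun i => expansion r (starG (l i)))) : ℝ) ≤
        c * (n : ℝ) ^ (r - 2)) ∧
    (s ≤ (∑ i ∈ Finset.range k, (l i + 1)) + r - 3 →
      ∃ c' : ℝ, 0 < c' ∧ ∃ N : ℕ, ∀ n : ℕ, N ≤ n →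
        c' * (n : ℝ) ^ (r - 2) ≤
          (exCount r n (completeHG r s)
            (hIUnion k (fun i => expansion r (starG (l i)))) : ℝ)) :=
  stmt7_general r s k l hr hk hl hsk
end

section
/- Let s ≥ r ≥ 2 be integers and let 𝓕 be an r-graph. Then ex_s(n, Berge-𝓕) − ex_r(n, 𝓕) ≤ ex_r(n, K_s^{(r)}, 𝓕) ≤ ex_s(n, Berge-𝓕). -/
open Finset

section Helpers14

lemma mem_subset_hsupp14 {G : HG} {e : Finset ℕ} (he : e ∈ G) : e ⊆ hsupp G :=
  Finset.le_sup (f := id) he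

lemma mem_hsupp14 {G : HG} {v : ℕ} : v ∈ hsupp G ↔ ∃ e ∈ G, v ∈ e := by
  unfold hsupp
  simp [Finset.mem_sup]

lemma hsupp_mono14 {G H : HG} (h : G ⊆ H) : hsupp G ⊆ hsupp H := by
  intro v hv
  obtain ⟨e, he, hve⟩ := mem_hsupp14.1 hv
  exact mem_hsupp14.2 ⟨e, h he, hve⟩

lemma hsupp_subset14 {G : HG} {A : Finset ℕ} (h : ∀ e ∈ G, e ⊆ A) : hsupp G ⊆ A := by
  intro v hv
  obtain ⟨e, he, hve⟩ := mem_hsupp14.1 hv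
  exact h e he hve

lemma hsupp_powersetCard14 {A : Finset ℕ} {r : ℕ} (hr : 1 ≤ r) (hrA : r ≤ A.card) :
    hsupp (A.powersetCard r) = A := by
  apply Finset.Subset.antisymm
  · exact hsupp_subset14 fun e he => (Finset.mem_powersetCard.1 he).1
  · intro v hv
    obtain ⟨t, ht, htc⟩ := Finset.exists_subset_card_eq
      (show r - 1 ≤ (A.erase v).card by rw [Finset.card_erase_of_mem hv]; omega)
    have hvt : v ∉ t := fun h => (Finset.mem_erase.1 (ht h)).1 rfl
    have hm : insert v t ∈ A.powersetCard r := by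
      rw [Finset.mem_powersetCard]
      refine ⟨Finset.insert_subset hv (ht.trans (Finset.erase_subset _ _)), ?_⟩
      rw [Finset.card_insert_of_notMem hvt, htc]; omega
    exact mem_subset_hsupp14 hm (Finset.mem_insert_self _ _)

lemma image_powersetCard14 {f : ℕ → ℕ} {A : Finset ℕ} (hf : Set.InjOn f ↑A) (r : ℕ) :
    (A.powersetCard r).image (Finset.image f) = (A.image f).powersetCard r := by
  classical
  ext e
  simp only [Finset.mem_image, Finset.mem_powersetCard]
  constructor
  · rintro ⟨t, ht, rfl⟩
    refine ⟨Finset.image_subset_image ht.1, ?_⟩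
    rw [Finset.card_image_of_injOn (hf.mono (Finset.coe_subset.2 ht.1))]
    exact ht.2
  · rintro ⟨hsub, hcard⟩
    set t := A.filter (fun a => f a ∈ e) with htdef
    have htA : t ⊆ A := Finset.filter_subset _ _
    have himg : t.image f = e := by
      apply Finset.Subset.antisymm
      · intro y hy
        obtain ⟨a, ha, rfl⟩ := Finset.mem_image.1 hy
        exact (Finset.mem_filter.1 ha).2
      · intro y hy
        obtain ⟨a, haA, rfl⟩ := Finset.mem_image.1 (hsub hy)
        exact Finset.mem_image_of_mem f (Finset.mem_filter.2 ⟨haA, hy⟩)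
    have htc : t.card = r := by
      rw [← hcard, ← himg, Finset.card_image_of_injOn (hf.mono (Finset.coe_subset.2 htA))]
    exact ⟨t, ⟨htA, htc⟩, himg⟩

lemma hsupp_complete14 {r s : ℕ} (hr : 1 ≤ r) (hrs : r ≤ s) :
    hsupp (completeHG r s) = Finset.range s :=
  hsupp_powersetCard14 hr (by simp [hrs])

lemma emap_complete14 {r s : ℕ} {f : ℕ → ℕ} (hf : Set.InjOn f ↑(Finset.range s)) :
    emap f (completeHG r s) = ((Finset.range s).image f).powersetCard r := by
  unfold emap completeHG
  exact image_powersetCard14 hf r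

lemma copy_complete_struct14 {r s : ℕ} (hr : 1 ≤ r) (hrs : r ≤ s) {K : HG}
    (h : IsCopy (completeHG r s) K) :
    K = (hsupp K).powersetCard r ∧ (hsupp K).card = s := by
  obtain ⟨f, hf, hemap⟩ := h
  rw [hsupp_complete14 hr hrs] at hf
  have hK : K = ((Finset.range s).image f).powersetCard r := by
    rw [← hemap, emap_complete14 hf]
  have hcard : ((Finset.range s).image f).card = s := by
    rw [Finset.card_image_of_injOn hf, Finset.card_range]
  have hsup : hsupp K = (Finset.range s).image f := by
    rw [hK, hsupp_powersetCard14 hr (by rw [hcard]; exact hrs)]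
  exact ⟨by rw [hsup, ← hK], by rw [hsup, hcard]⟩

lemma exists_image_eq14 {A B : Finset ℕ} (h : A.card = B.card) :
    ∃ f : ℕ → ℕ, Set.InjOn f ↑A ∧ A.image f = B := by
  classical
  set g : ℕ → ℕ := fun v => if hv : v ∈ A then ((Finset.equivOfCardEq h) ⟨v, hv⟩ : ℕ) else 0
    with hg
  have hinj : Set.InjOn g ↑A := by
    intro x hx y hy hxy
    simp only [Finset.mem_coe] at hx hy
    simp only [hg, dif_pos hx, dif_pos hy] at hxy
    exact congrArg Subtype.val ((Finset.equivOfCardEq h).injective (Subtype.ext hxy))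
  refine ⟨g, hinj, ?_⟩
  have hsub : A.image g ⊆ B := by
    intro y hy
    obtain ⟨a, ha, rfl⟩ := Finset.mem_image.1 hy
    simp only [hg, dif_pos ha]
    exact ((Finset.equivOfCardEq h) ⟨a, ha⟩).2
  apply Finset.eq_of_subset_of_card_le hsub
  rw [Finset.card_image_of_injOn hinj]
  omega

lemma isCopy_complete_powersetCard14 {r s : ℕ} (hr : 1 ≤ r) (hrs : r ≤ s) {E : Finset ℕ}
    (hE : E.card = s) : IsCopy (completeHG r s) (E.powersetCard r) := by
  obtain ⟨f, hf, hfim⟩ := exists_image_eq14 (A := Finset.range s) (B := E)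
    (by rw [Finset.card_range, hE])
  refine ⟨f, ?_, ?_⟩
  · rw [hsupp_complete14 hr hrs]; exact hf
  · rw [emap_complete14 hf, hfim]

lemma injOn_image_eq14 {f : ℕ → ℕ} {A t₁ t₂ : Finset ℕ} (hf : Set.InjOn f ↑A)
    (h1 : t₁ ⊆ A) (h2 : t₂ ⊆ A) (h : t₁.image f = t₂.image f) : t₁ = t₂ := by
  have hiff := hf.image_eq_image_iff (Finset.coe_subset.2 h1) (Finset.coe_subset.2 h2)
  rw [← Finset.coe_inj, ← hiff, ← Finset.coe_image, ← Finset.coe_image, h]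

lemma card_le_of_supp14 {G : HG} {n : ℕ} (h : hsupp G ⊆ Finset.range n) : G.card ≤ 2 ^ n := by
  calc G.card ≤ ((Finset.range n).powerset).card :=
        Finset.card_le_card (fun e he => Finset.mem_powerset.2 ((mem_subset_hsupp14 he).trans h))
    _ = 2 ^ n := by simp

lemma copyCount_le14 (H G : HG) : copyCount H G ≤ 2 ^ G.card := by
  have hsub : {K : HG | K ⊆ G ∧ IsCopy H K} ⊆ ↑(G.powerset) := by
    intro K hK
    simpa using hK.1
  calc copyCount H G ≤ (↑(G.powerset) : Set HG).ncard :=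
        Set.ncard_le_ncard hsub (G.powerset).finite_toSet
    _ = 2 ^ G.card := by rw [Set.ncard_coe_finset, Finset.card_powerset]

lemma bdd_turan14 (r n : ℕ) (F : HG) : BddAbove {m | ∃ G : HG, Uniform r G ∧
    hsupp G ⊆ Finset.range n ∧ ¬ Contains G F ∧ m = G.card} := by
  refine ⟨2 ^ n, ?_⟩
  rintro m ⟨G, -, hs, -, rfl⟩
  exact card_le_of_supp14 hs

lemma bdd_berge14 (s n : ℕ) (F : HG) : BddAbove {m | ∃ G : HG, Uniform s G ∧
    hsupp G ⊆ Finset.range n ∧ ¬ ContainsBerge G F ∧ m = G.card} := by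
  refine ⟨2 ^ n, ?_⟩
  rintro m ⟨G, -, hs, -, rfl⟩
  exact card_le_of_supp14 hs

lemma bdd_count14 (r n : ℕ) (H F : HG) : BddAbove {m | ∃ G : HG, Uniform r G ∧
    hsupp G ⊆ Finset.range n ∧ ¬ Contains G F ∧ m = copyCount H G} := by
  refine ⟨2 ^ 2 ^ n, ?_⟩
  rintro m ⟨G, -, hs, -, rfl⟩
  exact (copyCount_le14 H G).trans (Nat.pow_le_pow_right (by norm_num) (card_le_of_supp14 hs))

lemma greedy14 (r : ℕ) (G' : HG) :
    ∃ H : HG, ∃ g : Finset ℕ → Finset ℕ,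
      (∀ e ∈ H, e ⊆ g e ∧ g e ∈ G' ∧ e.card = r) ∧
      Set.InjOn g ↑H ∧
      G'.card ≤ H.card + (G'.filter (fun E => E.powersetCard r ⊆ H)).card := by
  classical
  induction G' using Finset.induction_on with
  | empty => exact ⟨∅, id, by simp, by simp, by simp⟩
  | @insert E G' hE ih =>
    obtain ⟨H, g, hprop, hinj, hcount⟩ := ih
    by_cases hcase : ∃ e ∈ E.powersetCard r, e ∉ H
    · obtain ⟨e₀, he₀E, he₀H⟩ := hcase
      refine ⟨insert e₀ H, Function.update g e₀ E, ?_, ?_, ?_⟩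
      · intro e he
        rcases Finset.mem_insert.1 he with rfl | heH
        · rw [Function.update_self]
          exact ⟨(Finset.mem_powersetCard.1 he₀E).1, Finset.mem_insert_self _ _,
            (Finset.mem_powersetCard.1 he₀E).2⟩
        · have hne : e ≠ e₀ := by rintro rfl; exact he₀H heH
          rw [Function.update_of_ne hne]
          exact ⟨(hprop e heH).1, Finset.mem_insert_of_mem (hprop e heH).2.1,
            (hprop e heH).2.2⟩
      · intro x hx y hy hxy
        simp only [Finset.coe_insert, Set.mem_insert_iff, Finset.mem_coe] at hx hy
        rcases hx with rfl | hx <;> rcases hy with rfl | hy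
        · rfl
        · exfalso
          rw [Function.update_self,
            Function.update_of_ne (by rintro rfl; exact he₀H hy)] at hxy
          exact hE (hxy ▸ (hprop y hy).2.1)
        · exfalso
          rw [Function.update_self,
            Function.update_of_ne (by rintro rfl; exact he₀H hx)] at hxy
          exact hE (hxy ▸ (hprop x hx).2.1)
        · rw [Function.update_of_ne (by rintro rfl; exact he₀H hx),
            Function.update_of_ne (by rintro rfl; exact he₀H hy)] at hxy
          exact hinj hx hy hxy
      · have hsub : G'.filter (fun E' => E'.powersetCard r ⊆ H) ⊆
            (insert E G').filter (fun E' => E'.powersetCard r ⊆ insert e₀ H) := by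
          intro x hx
          rw [Finset.mem_filter] at hx ⊢
          exact ⟨Finset.mem_insert_of_mem hx.1,
            hx.2.trans (Finset.subset_insert _ _)⟩
        have h1 := Finset.card_le_card hsub
        rw [Finset.card_insert_of_notMem hE, Finset.card_insert_of_notMem he₀H]
        omega
    · push_neg at hcase
      have hEsub : E.powersetCard r ⊆ H := fun e he => hcase e he
      refine ⟨H, g, fun e he => ⟨(hprop e he).1, Finset.mem_insert_of_mem (hprop e he).2.1,
        (hprop e he).2.2⟩, hinj, ?_⟩
      rw [Finset.filter_insert, if_pos hEsub, Finset.card_insert_of_notMem hE,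
        Finset.card_insert_of_notMem (fun h => hE (Finset.mem_filter.1 h).1)]
      omega

end Helpers14


lemma part1_member14 (r s n : ℕ) (hr : 2 ≤ r) (hrs : r ≤ s) (F : HG)
    (G' : HG) (hu : Uniform s G') (hsup : hsupp G' ⊆ Finset.range n)
    (hfree : ¬ ContainsBerge G' F) :
    G'.card ≤ exTuran r n F + exCount r n (completeHG r s) F := by
  classical
  obtain ⟨H, g, hprop, hinj, hcount⟩ := greedy14 r G'
  have hr1 : 1 ≤ r := by omega
  have hHsup : hsupp H ⊆ Finset.range n := by
    apply hsupp_subset14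
    intro e he
    exact ((hprop e he).1.trans (mem_subset_hsupp14 (hprop e he).2.1)).trans hsup
  have hHuni : Uniform r H := fun e he => (hprop e he).2.2
  have hmemH : ∀ (K : HG), K ⊆ H → ∀ f : ℕ → ℕ, emap f F = K → ∀ e ∈ F, e.image f ∈ H := by
    intro K hKH f hemap e he
    exact hKH (hemap ▸ Finset.mem_image_of_mem _ he)
  have hHfree : ¬ Contains H F := by
    rintro ⟨K, hKH, f, hfinj, hemap⟩
    apply hfree
    refine ⟨f, hfinj, fun e => ⟨g (e.1.image f),
      (hprop _ (hmemH K hKH f hemap e.1 e.2)).2.1⟩, ?_, ?_⟩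
    · intro e₁ e₂ h12
      have h1 : e₁.1.image f ∈ H := hmemH K hKH f hemap e₁.1 e₁.2
      have h2 : e₂.1.image f ∈ H := hmemH K hKH f hemap e₂.1 e₂.2
      have him : e₁.1.image f = e₂.1.image f :=
        hinj (Finset.mem_coe.2 h1) (Finset.mem_coe.2 h2) (congrArg Subtype.val h12)
      exact Subtype.ext (injOn_image_eq14 hfinj (mem_subset_hsupp14 e₁.2)
        (mem_subset_hsupp14 e₂.2) him)
    · intro e
      exact (hprop _ (hmemH K hKH f hemap e.1 e.2)).1
  have hTur : H.card ≤ exTuran r n F :=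
    le_csSup (bdd_turan14 r n F) ⟨H, hHuni, hHsup, hHfree, rfl⟩
  have hCnt : (G'.filter (fun E => E.powersetCard r ⊆ H)).card ≤
      exCount r n (completeHG r s) F := by
    set C : Set HG := {K : HG | K ⊆ H ∧ IsCopy (completeHG r s) K} with hCdef
    have hCfin : C.Finite :=
      Set.Finite.subset (H.powerset).finite_toSet
        (fun K hK => Finset.mem_coe.2 (Finset.mem_powerset.2 hK.1))
    have hmap : ∀ E ∈ G'.filter (fun E => E.powersetCard r ⊆ H),
        E.powersetCard r ∈ C := by
      intro E hE
      rw [Finset.mem_filter] at hE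
      exact ⟨hE.2, isCopy_complete_powersetCard14 hr1 hrs (hu E hE.1)⟩
    have hinjE : Set.InjOn (fun E : Finset ℕ => E.powersetCard r)
        (↑(G'.filter (fun E => E.powersetCard r ⊆ H)) : Set (Finset ℕ)) := by
      intro E₁ h₁ E₂ h₂ h
      simp only [Finset.coe_filter, Set.mem_setOf_eq] at h₁ h₂
      have c₁ : E₁.card = s := hu E₁ h₁.1
      have c₂ : E₂.card = s := hu E₂ h₂.1
      have := congrArg hsupp h
      rwa [hsupp_powersetCard14 hr1 (by omega), hsupp_powersetCard14 hr1 (by omega)] at this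
    have hcardim : ((G'.filter (fun E => E.powersetCard r ⊆ H)).image
        (fun E => E.powersetCard r)).card
        = (G'.filter (fun E => E.powersetCard r ⊆ H)).card :=
      Finset.card_image_of_injOn hinjE
    have hle : ((G'.filter (fun E => E.powersetCard r ⊆ H)).image
        (fun E => E.powersetCard r)).card ≤ copyCount (completeHG r s) H := by
      have hsubC : ↑((G'.filter (fun E => E.powersetCard r ⊆ H)).image
          (fun E => E.powersetCard r)) ⊆ C := by
        intro K hK
        obtain ⟨E, hE, rfl⟩ := Finset.mem_image.1 (Finset.mem_coe.1 hK)
        exact hmap E hE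
      calc ((G'.filter (fun E => E.powersetCard r ⊆ H)).image
          (fun E => E.powersetCard r)).card
          = (↑((G'.filter (fun E => E.powersetCard r ⊆ H)).image
            (fun E => E.powersetCard r)) : Set HG).ncard := (Set.ncard_coe_finset _).symm
        _ ≤ C.ncard := Set.ncard_le_ncard hsubC hCfin
        _ = copyCount (completeHG r s) H := rfl
    have := hcardim ▸ hle
    exact this.trans (le_csSup (bdd_count14 r n (completeHG r s) F)
      ⟨H, hHuni, hHsup, hHfree, rfl⟩)
  omega

lemma part2_member14 (r s n : ℕ) (hr : 2 ≤ r) (hrs : r ≤ s) (F : HG) (hF : Uniform r F)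
    (G : HG) (hu : Uniform r G) (hsupG : hsupp G ⊆ Finset.range n)
    (hfree : ¬ Contains G F) :
    ∃ G' : HG, Uniform s G' ∧ hsupp G' ⊆ Finset.range n ∧ ¬ ContainsBerge G' F ∧
      copyCount (completeHG r s) G = G'.card := by
  classical
  have hr1 : 1 ≤ r := by omega
  set C : Set HG := {K : HG | K ⊆ G ∧ IsCopy (completeHG r s) K} with hCdef
  have hCfin : C.Finite :=
    Set.Finite.subset (G.powerset).finite_toSet
      (fun K hK => Finset.mem_coe.2 (Finset.mem_powerset.2 hK.1))
  have hstruct : ∀ K ∈ C, K = (hsupp K).powersetCard r ∧ (hsupp K).card = s :=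
    fun K hK => copy_complete_struct14 hr1 hrs hK.2
  refine ⟨hCfin.toFinset.image hsupp, ?_, ?_, ?_, ?_⟩
  · intro E hE
    obtain ⟨K, hK, rfl⟩ := Finset.mem_image.1 hE
    exact (hstruct K (hCfin.mem_toFinset.1 hK)).2
  · apply hsupp_subset14
    intro E hE
    obtain ⟨K, hK, rfl⟩ := Finset.mem_image.1 hE
    exact (hsupp_mono14 (hCfin.mem_toFinset.1 hK).1).trans hsupG
  · rintro ⟨f, hfinj, φ, hφinj, hφ⟩
    apply hfree
    refine ⟨emap f F, ?_, f, hfinj, rfl⟩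
    intro x hx
    obtain ⟨e, heF, rfl⟩ := Finset.mem_image.1 hx
    have h1 : e.image f ⊆ (φ ⟨e, heF⟩).1 := hφ ⟨e, heF⟩
    obtain ⟨K, hKmem, hKs⟩ := Finset.mem_image.1 (φ ⟨e, heF⟩).2
    have hKC : K ∈ C := hCfin.mem_toFinset.1 hKmem
    have hcard : (e.image f).card = r := by
      rw [Finset.card_image_of_injOn (hfinj.mono (Finset.coe_subset.2
        (mem_subset_hsupp14 heF)))]
      exact hF e heF
    have hin : e.image f ∈ K := by
      rw [(hstruct K hKC).1]
      exact Finset.mem_powersetCard.2 ⟨hKs ▸ h1, hcard⟩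
    exact hKC.1 hin
  · have hinjsupp : Set.InjOn hsupp ↑hCfin.toFinset := by
      intro K₁ h₁ K₂ h₂ h
      rw [(hstruct K₁ (hCfin.mem_toFinset.1 (Finset.mem_coe.1 h₁))).1,
        (hstruct K₂ (hCfin.mem_toFinset.1 (Finset.mem_coe.1 h₂))).1, h]
    rw [Finset.card_image_of_injOn hinjsupp]
    exact Set.ncard_eq_toFinset_card C hCfin

/-- For `s ≥ r ≥ 2` and an `r`-graph `F`:
`ex_s(n, Berge-F) - ex_r(n, F) ≤ ex_r(n, K_s^{(r)}, F) ≤ ex_s(n, Berge-F)`. -/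
theorem stmt14 (r s n : ℕ) (hr : 2 ≤ r) (hrs : r ≤ s) (F : HG) (hF : Uniform r F) :
    exBerge s n F - exTuran r n F ≤ exCount r n (completeHG r s) F ∧
    exCount r n (completeHG r s) F ≤ exBerge s n F := by
  constructor
  · rw [tsub_le_iff_right, add_comm]
    apply csSup_le'
    rintro m ⟨G', hu, hs, hfree, rfl⟩
    exact part1_member14 r s n hr hrs F G' hu hs hfree
  · apply csSup_le'
    rintro m ⟨G, hu, hs, hfree, rfl⟩
    obtain ⟨G', h1, h2, h3, h4⟩ := part2_member14 r s n hr hrs F hF G hu hs hfree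
    rw [h4]
    exact le_csSup (bdd_berge14 s n F) ⟨G', h1, h2, h3, rfl⟩
end
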